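/- arXiv:1105.4306 — 5 statements merged into one kernel-verified Lean document; each statement's English description precedes it below -/
import Mathlib

section
/- For every nonnegative integer n, the sum over i from 0 to n of binom(2n, 2i) * C_i * C_{n-i} equals C_n * C_{n+1}, where C_k = binom(2k,k)/(k+1) is the k-th Catalan number. -/
open Nat Finset

lemma cat_q (k : ℕ) : (catalan k : ℚ) = (2*k)! / (k ! * (k+1)!) := by
  have h1 : (k+1) * catalan k = (2*k).choose k := by
    rw [succ_mul_catalan_eq_centralBinom]; rfl
  have h2 : (2*k).choose k * k ! * k ! = (2*k)! := by
    have := Nat.choose_mul_factorial_mul_factorial (show k ≤ 2*k by omega)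
    have hs : 2*k - k = k := by omega
    rwa [hs] at this
  have h3 : ((k+1) * catalan k * k ! * k ! : ℚ) = ((2*k)! : ℚ) := by
    exact_mod_cast congrArg (Nat.cast : ℕ → ℚ) (by rw [h1]; exact h2)
  have hk : ((k ! : ℚ)) ≠ 0 := by exact_mod_cast k.factorial_ne_zero
  have hk1 : (((k+1)! : ℚ)) ≠ 0 := by exact_mod_cast (k+1).factorial_ne_zero
  field_simp
  rw [Nat.factorial_succ] at *
  push_cast at h3 ⊢
  nlinarith [h3]

lemma lemA (k j : ℕ) :
    (((2*(k+j)).choose (2*k) : ℚ) * catalan k * catalan j)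
      = ((k+j+1).choose k : ℚ) * ((k+j+1).choose (k+1))
        * ((2*(k+j))! / ((k+j+1)! * (k+j+1)!)) := by
  have h1 : (((2*(k+j)).choose (2*k)) : ℚ) = (2*(k+j))! / ((2*k)! * (2*j)!) := by
    rw [Nat.cast_choose ℚ (show 2*k ≤ 2*(k+j) by omega),
      show 2*(k+j) - 2*k = 2*j by omega]
  have h2 : (((k+j+1).choose k) : ℚ) = (k+j+1)! / (k ! * (j+1)!) := by
    rw [Nat.cast_choose ℚ (show k ≤ k+j+1 by omega),
      show k+j+1 - k = j+1 by omega]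
  have h3 : (((k+j+1).choose (k+1)) : ℚ) = (k+j+1)! / ((k+1)! * j !) := by
    rw [Nat.cast_choose ℚ (show k+1 ≤ k+j+1 by omega),
      show k+j+1 - (k+1) = j by omega]
  rw [h1, h2, h3, cat_q, cat_q]
  have f1 : ((2*k)! : ℚ) ≠ 0 := by exact_mod_cast (2*k).factorial_ne_zero
  have f2 : ((2*j)! : ℚ) ≠ 0 := by exact_mod_cast (2*j).factorial_ne_zero
  have f3 : ((k !) : ℚ) ≠ 0 := by exact_mod_cast k.factorial_ne_zero
  have f4 : (((k+1)!) : ℚ) ≠ 0 := by exact_mod_cast (k+1).factorial_ne_zero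
  have f5 : ((j !) : ℚ) ≠ 0 := by exact_mod_cast j.factorial_ne_zero
  have f6 : (((j+1)!) : ℚ) ≠ 0 := by exact_mod_cast (j+1).factorial_ne_zero
  have f7 : (((k+j+1)!) : ℚ) ≠ 0 := by exact_mod_cast (k+j+1).factorial_ne_zero
  field_simp

lemma vdm (n : ℕ) :
    ∑ k ∈ range (n+1), (n+1).choose k * (n+1).choose (k+1) = (2*n+2).choose n := by
  have h : (2*n+2) = (n+1) + (n+1) := by omega
  rw [h, Nat.add_choose_eq]
  rw [Finset.Nat.sum_antidiagonal_eq_sum_range_succ (fun i j => (n+1).choose i * (n+1).choose j)]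
  refine (Finset.sum_congr rfl fun i hi => ?_).symm
  have hi' : i ≤ n := Nat.lt_succ_iff.mp (mem_range.mp hi)
  congr 1
  rw [← Nat.choose_symm (show n - i ≤ n + 1 by omega)]
  congr 1
  omega

lemma rhs_q (n : ℕ) :
    ((catalan n : ℚ) * catalan (n+1))
      = ((2*n+2).choose n : ℚ) * ((2*n)! / ((n+1)! * (n+1)!)) := by
  rw [cat_q, cat_q, Nat.cast_choose ℚ (show n ≤ 2*n+2 by omega)]
  have e1 : 2*n+2 - n = n + 2 := by omega
  have e2 : 2*(n+1) = 2*n+2 := by omega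
  rw [e1, e2]
  have f1 : ((n !) : ℚ) ≠ 0 := by exact_mod_cast n.factorial_ne_zero
  have f2 : (((n+1)!) : ℚ) ≠ 0 := by exact_mod_cast (n+1).factorial_ne_zero
  have f3 : (((n+2)!) : ℚ) ≠ 0 := by exact_mod_cast (n+2).factorial_ne_zero
  field_simp

/-- Touchard-like identity: `∑_i C(2n,2i) C_i C_{n-i} = C_n C_{n+1}`. -/
theorem stmt0 (n : ℕ) :
    ∑ i ∈ Finset.range (n + 1), Nat.choose (2 * n) (2 * i) * catalan i * catalan (n - i) =
      catalan n * catalan (n + 1) := by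
  have key : ((∑ i ∈ Finset.range (n + 1),
      Nat.choose (2 * n) (2 * i) * catalan i * catalan (n - i) : ℕ) : ℚ)
      = ((catalan n * catalan (n + 1) : ℕ) : ℚ) := by
    push_cast
    have h1 : ∀ k ∈ Finset.range (n+1),
        (((2*n).choose (2*k) : ℚ)) * catalan k * catalan (n-k)
        = ((n+1).choose k : ℚ) * ((n+1).choose (k+1))
          * ((2*n)! / ((n+1)! * (n+1)!)) := by
      intro k hk
      have hk' : k ≤ n := Nat.lt_succ_iff.mp (mem_range.mp hk)
      obtain ⟨j, rfl⟩ := Nat.exists_eq_add_of_le hk'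
      have hsub : k + j - k = j := by omega
      rw [hsub]
      exact lemA k j
    rw [Finset.sum_congr rfl h1, ← Finset.sum_mul]
    have h2 : (∑ k ∈ Finset.range (n+1),
        ((n+1).choose k : ℚ) * ((n+1).choose (k+1))) = ((2*n+2).choose n : ℚ) := by
      exact_mod_cast congrArg (Nat.cast : ℕ → ℚ) (vdm n)
    rw [h2, ← rhs_q]
  exact Nat.cast_injective key
end

section
/- The number of noncrossing 2-colored matchings on the set {1,...,2n} equals C_n * C_{n+1}. -/
/-- An `m`-colored matching on `{1,…,2n}`, encoded by a fixed-point-free involution `f`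
together with a color function `c` constant on arcs. -/
def IsColoredMatching (n m : ℕ) (f : Fin (2*n) → Fin (2*n)) (c : Fin (2*n) → Fin m) : Prop :=
  (∀ i, f (f i) = i) ∧ (∀ i, f i ≠ i) ∧ (∀ i, c (f i) = c i)

/-- Noncrossing: no two arcs of the same color cross. -/
def IsNoncrossing (n m : ℕ) (f : Fin (2*n) → Fin (2*n)) (c : Fin (2*n) → Fin m) : Prop :=
  ¬ ∃ i j : Fin (2*n), c i = c j ∧ i < j ∧ j < f i ∧ f i < f j

/-!
Each color class of a noncrossing 2-colored matching carries an ordinary noncrossing perfect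
matching, and a coloring together with such a matching on every class determines the colored
matching. An ordered `m`-set has no noncrossing perfect matching for odd `m` and `C_{m/2}` of them
for even `m`: the partner `j` of the least point splits the other points into those below `j` and
those above `j`, each matched among themselves, which is the Catalan recursion. Summing over the
set `A` of color-0 points, only `|A| = 2i` contributes, leaving `∑ i, (2n choose 2i) C_i C_{n-i}`.
This is `C_n C_{n+1}` (Touchard's identity): the `i`-th term equals
`(2n)! / (n+1)!² · (n+1 choose i) (n+1 choose n-i)`, and Vandermonde's identity sums these.
-/

open Finset

def halfCatalan (m : ℕ) : ℕ := if Even m then catalan (m / 2) else 0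

lemma halfCatalan_two_mul (k : ℕ) : halfCatalan (2 * k) = catalan k := by
  simp [halfCatalan]

lemma halfCatalan_of_odd {m : ℕ} (hm : Odd m) : halfCatalan m = 0 := by
  simp [halfCatalan, Nat.not_even_iff_odd.2 hm]

lemma sum_antidiagonal_two_mul_mul_halfCatalan (q : ℕ) (w : ℕ → ℕ → ℕ) :
    ∑ p ∈ antidiagonal (2 * q), w p.1 p.2 * (halfCatalan p.1 * halfCatalan p.2) =
      ∑ p ∈ antidiagonal q, w (2 * p.1) (2 * p.2) * (catalan p.1 * catalan p.2) := by
  have hsub : (antidiagonal q).image (fun p => (2 * p.1, 2 * p.2)) ⊆ antidiagonal (2 * q) := by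
    intro p hp
    obtain ⟨⟨u, v⟩, huv, rfl⟩ := mem_image.1 hp
    rw [HasAntidiagonal.mem_antidiagonal] at huv ⊢
    omega
  rw [← sum_subset hsub, sum_image fun p _ p' _ h => by simp_all [Prod.ext_iff]]
  · simp only [halfCatalan_two_mul]
  · rintro ⟨i, j⟩ hij hnot
    rw [HasAntidiagonal.mem_antidiagonal] at hij
    have hi : Odd i := by
      refine Nat.not_even_iff_odd.1 fun ⟨u, hu⟩ => hnot (mem_image.2 ⟨(u, q - u), ?_, ?_⟩)
      · rw [HasAntidiagonal.mem_antidiagonal]; omega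
      · ext <;> dsimp only <;> omega
    simp [halfCatalan_of_odd hi]

lemma sum_antidiagonal_halfCatalan_mul_of_odd {k : ℕ} (hk : Odd k) :
    ∑ p ∈ antidiagonal k, halfCatalan p.1 * halfCatalan p.2 = 0 := by
  refine sum_eq_zero fun ⟨i, j⟩ hij => ?_
  rw [HasAntidiagonal.mem_antidiagonal] at hij
  rcases Nat.even_or_odd i with hi | hi
  · have hj : Odd j := (Nat.odd_add'.1 (hij ▸ hk)).2 hi
    simp [halfCatalan_of_odd hj]
  · simp [halfCatalan_of_odd hi]

lemma halfCatalan_add_two (k : ℕ) :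
    halfCatalan (k + 2) = ∑ p ∈ antidiagonal k, halfCatalan p.1 * halfCatalan p.2 := by
  rcases Nat.even_or_odd' k with ⟨q, rfl | rfl⟩
  · rw [show 2 * q + 2 = 2 * (q + 1) by ring, halfCatalan_two_mul, catalan_succ']
    simpa using (sum_antidiagonal_two_mul_mul_halfCatalan q fun _ _ => 1).symm
  · rw [sum_antidiagonal_halfCatalan_mul_of_odd (odd_two_mul_add_one q)]
    exact halfCatalan_of_odd ((odd_two_mul_add_one q).add_even even_two)

lemma halfCatalan_succ (m : ℕ) :
    halfCatalan (m + 1) = ∑ t ∈ range m, halfCatalan t * halfCatalan (m - 1 - t) := by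
  rcases m with _ | k
  · exact halfCatalan_of_odd odd_one
  · rw [halfCatalan_add_two,
      Nat.sum_antidiagonal_eq_sum_range_succ fun i j => halfCatalan i * halfCatalan j]
    rfl

lemma cast_catalan (k : ℕ) :
    (catalan k : ℚ) = (2 * k).factorial / (k.factorial * (k + 1).factorial) := by
  have h : ((k + 1 : ℕ) * catalan k : ℚ) = (2 * k).choose k := by
    rw [← Nat.cast_mul, succ_mul_catalan_eq_centralBinom, Nat.centralBinom_eq_two_mul_choose]
  rw [Nat.cast_choose ℚ (by omega : k ≤ 2 * k), show 2 * k - k = k by omega] at h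
  rw [Nat.factorial_succ]
  push_cast at h ⊢
  field_simp at h ⊢
  linear_combination h

theorem sum_antidiagonal_choose_mul_catalan (n : ℕ) :
    ∑ p ∈ antidiagonal n, (2 * n).choose (2 * p.1) * (catalan p.1 * catalan p.2) =
      catalan n * catalan (n + 1) := by
  have hterm : ∀ p ∈ antidiagonal n,
      (((2 * n).choose (2 * p.1) * (catalan p.1 * catalan p.2) : ℕ) : ℚ) =
        (2 * n).factorial / ((n + 1).factorial * (n + 1).factorial) *
          ((n + 1).choose p.1 * (n + 1).choose p.2 : ℕ) := by
    rintro ⟨i, j⟩ hij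
    rw [HasAntidiagonal.mem_antidiagonal] at hij
    subst hij
    push_cast
    rw [cast_catalan, cast_catalan, Nat.cast_choose ℚ (by omega : 2 * i ≤ 2 * (i + j)),
      Nat.cast_choose ℚ (by omega : i ≤ i + j + 1), Nat.cast_choose ℚ (by omega : j ≤ i + j + 1),
      show 2 * (i + j) - 2 * i = 2 * j by omega, show i + j + 1 - i = j + 1 by omega,
      show i + j + 1 - j = i + 1 by omega]
    field_simp
  rw [← Nat.cast_inj (R := ℚ), Nat.cast_sum, sum_congr rfl hterm, ← mul_sum, ← Nat.cast_sum,
    ← Nat.add_choose_eq, Nat.cast_choose ℚ (by omega : n ≤ n + 1 + (n + 1)), Nat.cast_mul,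
    cast_catalan, cast_catalan, show n + 1 + (n + 1) - n = n + 2 by omega,
    show n + 1 + (n + 1) = 2 * (n + 1) by ring]
  field_simp

section NoncrossingMatching

variable {α : Type*} [LinearOrder α]

/-- Demanded for all pairs, the one-sided condition `f y ≤ f x` also rules out the crossing
`f y < x < y < f x`: apply it to the pair `f y < x`. -/
structure IsNoncrossingMatching (s : Finset α) (f : α → α) : Prop where
  involutive : Function.Involutive f
  ne_iff_mem : ∀ x, f x ≠ x ↔ x ∈ s
  noncrossing : ∀ x y, x < y → y < f x → f y ≤ f x

abbrev NoncrossingMatching (s : Finset α) : Type _ := {f : α → α // IsNoncrossingMatching s f}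

namespace IsNoncrossingMatching

variable {s t : Finset α} {f : α → α} {a j x : α}

lemma apply_ne_self (hf : IsNoncrossingMatching s f) (hx : x ∈ s) : f x ≠ x :=
  (hf.ne_iff_mem x).2 hx

lemma apply_eq_self (hf : IsNoncrossingMatching s f) (hx : x ∉ s) : f x = x :=
  not_not.1 (mt (hf.ne_iff_mem x).1 hx)

lemma apply_mem (hf : IsNoncrossingMatching s f) (hx : x ∈ s) : f x ∈ s :=
  (hf.ne_iff_mem _).1 fun h => hf.apply_ne_self hx ((hf.involutive x).symm.trans h).symm

lemma apply_lt (hf : IsNoncrossingMatching s f) {b : α} (hs : ∀ y ∈ s, y < b) (hx : x < b) :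
    f x < b := by
  by_cases hxs : x ∈ s
  · exact hs _ (hf.apply_mem hxs)
  · rwa [hf.apply_eq_self hxs]

lemma lt_apply (hf : IsNoncrossingMatching s f) {b : α} (hs : ∀ y ∈ s, b < y) (hx : b < x) :
    b < f x := by
  by_cases hxs : x ∈ s
  · exact hs _ (hf.apply_mem hxs)
  · rwa [hf.apply_eq_self hxs]

lemma piecewise_apply [DecidableEq α] (hf : IsNoncrossingMatching s f) (hx : x ∈ s → x ∈ t) :
    t.piecewise f id x = f x := by
  by_cases hxt : x ∈ t
  · exact piecewise_eq_of_mem _ _ _ hxt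
  · rw [piecewise_eq_of_notMem _ _ _ hxt, id, hf.apply_eq_self (mt hx hxt)]

lemma apply_mem_inner (hf : IsNoncrossingMatching s f) (ha : a ∈ lowerBounds (s : Set α))
    (hfa : f a = j) (hx : x ∈ {x ∈ s | a < x ∧ x < j}) : f x ∈ {x ∈ s | a < x ∧ x < j} := by
  subst hfa
  obtain ⟨hxs, hax, hxfa⟩ := mem_filter.1 hx
  have hfx_ne : f x ≠ a := fun h => hxfa.ne (by rw [← h, hf.involutive])
  have hfx_ne' : f x ≠ f a := fun h => hax.ne' (hf.involutive.injective h)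
  exact mem_filter.2 ⟨hf.apply_mem hxs, lt_of_le_of_ne (ha (hf.apply_mem hxs)) hfx_ne.symm,
    lt_of_le_of_ne (hf.noncrossing a x hax hxfa) hfx_ne'⟩

lemma apply_mem_outer (hf : IsNoncrossingMatching s f) (ha : a ∈ lowerBounds (s : Set α))
    (hfa : f a = j) (haj : a < j) (hx : x ∈ {x ∈ s | j < x}) : f x ∈ {x ∈ s | j < x} := by
  subst hfa
  obtain ⟨hxs, hfax⟩ := mem_filter.1 hx
  refine mem_filter.2 ⟨hf.apply_mem hxs, lt_of_not_ge fun hle => ?_⟩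
  have hfx_ne : f x ≠ a := fun h => hfax.ne (by rw [← h, hf.involutive])
  have hfx_ne' : f x ≠ f a := fun h => (haj.trans hfax).ne' (hf.involutive.injective h)
  have hinner := hf.apply_mem_inner ha rfl (mem_filter.2 ⟨hf.apply_mem hxs,
    lt_of_le_of_ne (ha (hf.apply_mem hxs)) hfx_ne.symm, lt_of_le_of_ne hle hfx_ne'⟩)
  rw [hf.involutive] at hinner
  exact (mem_filter.1 hinner).2.2.not_gt hfax

end IsNoncrossingMatching

lemma isNoncrossingMatching_piecewise [DecidableEq α] {t : Finset α} {f : α → α}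
    (hmaps : ∀ x ∈ t, f x ∈ t) (hinv : ∀ x ∈ t, f (f x) = x) (hne : ∀ x ∈ t, f x ≠ x)
    (hnc : ∀ x ∈ t, ∀ y ∈ t, x < y → y < f x → f y ≤ f x) :
    IsNoncrossingMatching t (t.piecewise f id) where
  involutive x := by
    by_cases hx : x ∈ t
    · rw [piecewise_eq_of_mem _ _ _ hx, piecewise_eq_of_mem _ _ _ (hmaps x hx), hinv x hx]
    · rw [piecewise_eq_of_notMem _ _ _ hx, id, piecewise_eq_of_notMem _ _ _ hx, id]
  ne_iff_mem x := by
    by_cases hx : x ∈ t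
    · simp [hne x hx, hx]
    · simp [hx]
  noncrossing x y hxy hyx := by
    by_cases hx : x ∈ t
    · rw [piecewise_eq_of_mem _ _ _ hx] at hyx ⊢
      by_cases hy : y ∈ t
      · rw [piecewise_eq_of_mem _ _ _ hy]; exact hnc x hx y hy hxy hyx
      · rw [piecewise_eq_of_notMem _ _ _ hy]; exact hyx.le
    · rw [piecewise_eq_of_notMem _ _ _ hx, id] at hyx
      exact absurd (hxy.trans hyx) (lt_irrefl x)

lemma IsNoncrossingMatching.restrict [DecidableEq α] {s t : Finset α} {f : α → α}
    (hf : IsNoncrossingMatching s f) (hts : t ⊆ s) (hmaps : ∀ x ∈ t, f x ∈ t) :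
    IsNoncrossingMatching t (t.piecewise f id) :=
  isNoncrossingMatching_piecewise hmaps (fun x _ => hf.involutive x)
    (fun _ hx => hf.apply_ne_self (hts hx)) (fun x _ y _ => hf.noncrossing x y)

instance (s : Finset α) : Finite (NoncrossingMatching s) := by
  refine Finite.of_injective
    (fun (f : NoncrossingMatching s) (x : s) => (⟨f.1 x, f.2.apply_mem x.2⟩ : s)) fun f g h => ?_
  refine Subtype.ext (funext fun x => ?_)
  by_cases hx : x ∈ s
  · exact congrArg Subtype.val (congrFun h ⟨x, hx⟩)
  · rw [f.2.apply_eq_self hx, g.2.apply_eq_self hx]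

lemma card_noncrossingMatching_empty : Nat.card (NoncrossingMatching (∅ : Finset α)) = 1 := by
  refine Nat.card_eq_one_iff_exists.2
    ⟨⟨id, fun _ => rfl, by simp, fun x y hxy hyx => ?_⟩, fun f => ?_⟩
  · exact absurd (hxy.trans hyx) (lt_irrefl x)
  · exact Subtype.ext (funext fun x => f.2.apply_eq_self (notMem_empty x))

def glue (a j : α) (g h : α → α) (x : α) : α :=
  if x = a then j else if x = j then a else if x < j then g x else h x

section glue

variable {s : Finset α} {a j x : α} {g h : α → α}

lemma glue_left : glue a j g h a = j := if_pos rfl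

lemma glue_right (haj : a < j) : glue a j g h j = a := by
  rw [glue, if_neg haj.ne', if_pos rfl]

lemma glue_of_lt (hxa : x ≠ a) (hxj : x < j) : glue a j g h x = g x := by
  rw [glue, if_neg hxa, if_neg hxj.ne, if_pos hxj]

lemma glue_of_gt (haj : a < j) (hjx : j < x) : glue a j g h x = h x := by
  rw [glue, if_neg (haj.trans hjx).ne', if_neg hjx.ne', if_neg hjx.not_gt]

lemma glue_of_notMem (ha : a ∈ s) (hj : j ∈ s) (haj : a < j)
    (hg : IsNoncrossingMatching {x ∈ s | a < x ∧ x < j} g)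
    (hh : IsNoncrossingMatching {x ∈ s | j < x} h) (hx : x ∉ s) : glue a j g h x = x := by
  rcases lt_or_gt_of_ne (show x ≠ j by rintro rfl; exact hx hj) with hxj | hjx
  · rw [glue_of_lt (by rintro rfl; exact hx ha) hxj,
      hg.apply_eq_self fun h => hx (mem_filter.1 h).1]
  · rw [glue_of_gt haj hjx, hh.apply_eq_self fun h => hx (mem_filter.1 h).1]

lemma isNoncrossingMatching_glue (ha : IsLeast (s : Set α) a) (hj : j ∈ s) (haj : a < j)
    (hg : IsNoncrossingMatching {x ∈ s | a < x ∧ x < j} g)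
    (hh : IsNoncrossingMatching {x ∈ s | j < x} h) :
    IsNoncrossingMatching s (glue a j g h) := by
  have hg_lt : ∀ {x}, x < j → g x < j := hg.apply_lt fun y hy => (mem_filter.1 hy).2.2
  have hg_gt : ∀ {x}, a < x → a < g x := hg.lt_apply fun y hy => (mem_filter.1 hy).2.1
  have hh_gt : ∀ {x}, j < x → j < h x := hh.lt_apply fun y hy => (mem_filter.1 hy).2
  have cases : ∀ x ∈ s, x = a ∨ x = j ∨ (a < x ∧ x < j) ∨ j < x := fun x hx => by
    rcases (ha.2 hx).eq_or_lt with rfl | hax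
    · exact Or.inl rfl
    · rcases lt_trichotomy x j with hxj | rfl | hjx <;> simp [*]
  have hfix : ∀ {x}, x ∉ s → glue a j g h x = x := glue_of_notMem ha.1 hj haj hg hh
  refine ⟨fun x => ?_, fun x => ?_, fun x y hxy hyx => ?_⟩ <;> by_cases hx : x ∈ s
  · rcases cases x hx with rfl | rfl | ⟨hax, hxj⟩ | hjx
    · rw [glue_left, glue_right haj]
    · rw [glue_right haj, glue_left]
    · rw [glue_of_lt hax.ne' hxj, glue_of_lt (hg_gt hax).ne' (hg_lt hxj), hg.involutive]
    · rw [glue_of_gt haj hjx, glue_of_gt haj (hh_gt hjx), hh.involutive]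
  · rw [hfix hx, hfix hx]
  · simp only [hx, iff_true]
    rcases cases x hx with rfl | rfl | ⟨hax, hxj⟩ | hjx
    · rw [glue_left]; exact haj.ne'
    · rw [glue_right haj]; exact haj.ne
    · rw [glue_of_lt hax.ne' hxj]; exact hg.apply_ne_self (mem_filter.2 ⟨hx, hax, hxj⟩)
    · rw [glue_of_gt haj hjx]; exact hh.apply_ne_self (mem_filter.2 ⟨hx, hjx⟩)
  · simp [hfix hx, hx]
  · rcases cases x hx with rfl | rfl | ⟨hax, hxj⟩ | hjx
    · rw [glue_left] at hyx ⊢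
      rw [glue_of_lt hxy.ne' hyx]
      exact (hg_lt hyx).le
    · rw [glue_right haj] at hyx
      exact absurd (hxy.trans hyx) haj.not_gt
    · rw [glue_of_lt hax.ne' hxj] at hyx ⊢
      rw [glue_of_lt (hax.trans hxy).ne' (hyx.trans (hg_lt hxj))]
      exact hg.noncrossing x y hxy hyx
    · rw [glue_of_gt haj hjx] at hyx ⊢
      rw [glue_of_gt haj (hjx.trans hxy)]
      exact hh.noncrossing x y hxy hyx
  · rw [hfix hx] at hyx
    exact absurd (hxy.trans hyx) (lt_irrefl x)

end glue

def partnerFiberEquiv [DecidableEq α] {s : Finset α} {a j : α} (ha : IsLeast (s : Set α) a)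
    (hj : j ∈ s) (haj : a < j) :
    {f : NoncrossingMatching s // f.1 a = j} ≃
      NoncrossingMatching {x ∈ s | a < x ∧ x < j} × NoncrossingMatching {x ∈ s | j < x} where
  toFun f :=
    (⟨_, f.1.2.restrict (filter_subset _ _) fun _ => f.1.2.apply_mem_inner ha.2 f.2⟩,
     ⟨_, f.1.2.restrict (filter_subset _ _) fun _ => f.1.2.apply_mem_outer ha.2 f.2 haj⟩)
  invFun gh := ⟨⟨glue a j gh.1.1 gh.2.1, isNoncrossingMatching_glue ha hj haj gh.1.2 gh.2.2⟩,
    glue_left⟩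
  left_inv := by
    rintro ⟨⟨f, hf⟩, hfa : f a = j⟩
    refine Subtype.ext (Subtype.ext (funext fun x => ?_))
    dsimp only
    rcases eq_or_ne x a with rfl | hxa
    · rw [glue_left, hfa]
    rcases lt_trichotomy x j with hxj | rfl | hjx
    · rw [glue_of_lt hxa hxj, hf.piecewise_apply fun hx =>
        mem_filter.2 ⟨hx, lt_of_le_of_ne (ha.2 hx) hxa.symm, hxj⟩]
    · rw [glue_right haj, ← hfa, hf.involutive]
    · rw [glue_of_gt haj hjx, hf.piecewise_apply fun hx => mem_filter.2 ⟨hx, hjx⟩]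
  right_inv := by
    rintro ⟨⟨g, hg⟩, h, hh⟩
    refine Prod.ext (Subtype.ext (funext fun x => ?_)) (Subtype.ext (funext fun x => ?_))
    · dsimp only
      by_cases hx : x ∈ {x ∈ s | a < x ∧ x < j}
      · obtain ⟨-, hax, hxj⟩ := mem_filter.1 hx
        rw [piecewise_eq_of_mem _ _ _ hx, glue_of_lt hax.ne' hxj]
      · rw [piecewise_eq_of_notMem _ _ _ hx, id, hg.apply_eq_self hx]
    · dsimp only
      by_cases hx : x ∈ {x ∈ s | j < x}
      · rw [piecewise_eq_of_mem _ _ _ hx, glue_of_gt haj (mem_filter.1 hx).2]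
      · rw [piecewise_eq_of_notMem _ _ _ hx, id, hh.apply_eq_self hx]

lemma sum_card_filter_lt_card_filter_gt {M : Type*} [AddCommMonoid M] (s : Finset α)
    (G : ℕ → ℕ → M) :
    ∑ j ∈ s, G #{x ∈ s | x < j} #{x ∈ s | j < x} = ∑ t ∈ range #s, G t (#s - 1 - t) := by
  classical
  induction s using Finset.induction_on_min generalizing G with
  | empty => simp
  | insert a s ha ih =>
    have has : a ∉ s := fun h => (ha a h).false
    have hlt : ∀ j ∈ s, #{x ∈ insert a s | x < j} = #{x ∈ s | x < j} + 1 := fun j hj => by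
      rw [filter_insert, if_pos (ha j hj), card_insert_of_notMem fun h => has (mem_filter.1 h).1]
    have hgt : ∀ j ∈ s, {x ∈ insert a s | j < x} = {x ∈ s | j < x} := fun j hj => by
      rw [filter_insert, if_neg (ha j hj).not_gt]
    have hmin_lt : {x ∈ insert a s | x < a} = ∅ :=
      filter_eq_empty_iff.2 fun x hx => not_lt.2 (by
        rcases mem_insert.1 hx with rfl | hx
        exacts [le_rfl, (ha x hx).le])
    have hmin_gt : {x ∈ insert a s | a < x} = s := by
      rw [filter_insert, if_neg (lt_irrefl a), filter_true_of_mem ha]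
    rw [sum_insert has, card_insert_of_notMem has, sum_range_succ', hmin_lt, hmin_gt,
      sum_congr rfl fun j hj => by rw [hlt j hj, hgt j hj], ih fun t u => G (t + 1) u,
      card_empty, add_comm]
    congr 1
    exact sum_congr rfl fun t ht => by rw [mem_range] at ht; congr 1; omega

lemma mem_erase_iff_of_isLeast {s : Finset α} {a x : α} (ha : IsLeast (s : Set α) a) :
    x ∈ s.erase a ↔ x ∈ s ∧ a < x :=
  ⟨fun hx => ⟨(mem_erase.1 hx).2, lt_of_le_of_ne (ha.2 (mem_erase.1 hx).2) (mem_erase.1 hx).1.symm⟩,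
    fun ⟨hx, hax⟩ => mem_erase.2 ⟨hax.ne', hx⟩⟩

theorem card_noncrossingMatching (s : Finset α) :
    Nat.card (NoncrossingMatching s) = halfCatalan #s := by
  classical
  induction s using Finset.strongInduction with | _ s ih => ?_
  rcases s.eq_empty_or_nonempty with rfl | hs
  · simpa [halfCatalan] using card_noncrossingMatching_empty (α := α)
  set a := s.min' hs
  have ha : IsLeast (s : Set α) a := s.isLeast_min' hs
  set s' := s.erase a
  have hfiber : ∀ j ∈ s', Nat.card {f : NoncrossingMatching s // f.1 a = j} =
      halfCatalan #{x ∈ s' | x < j} * halfCatalan #{x ∈ s' | j < x} := by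
    intro j hj
    obtain ⟨hjs, haj⟩ := (mem_erase_iff_of_isLeast ha).1 hj
    have hinner : {x ∈ s' | x < j} = {x ∈ s | a < x ∧ x < j} := by
      ext x; simp only [s', mem_filter, mem_erase_iff_of_isLeast ha, and_assoc]
    have houter : {x ∈ s' | j < x} = {x ∈ s | j < x} := by
      ext x
      simp only [s', mem_filter, mem_erase_iff_of_isLeast ha]
      exact ⟨fun h => ⟨h.1.1, h.2⟩, fun h => ⟨⟨h.1, haj.trans h.2⟩, h.2⟩⟩
    rw [Nat.card_congr (partnerFiberEquiv ha hjs haj), Nat.card_prod, hinner, houter,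
      ih _ (filter_ssubset.2 ⟨a, ha.1, fun h => lt_irrefl a h.1⟩),
      ih _ (filter_ssubset.2 ⟨a, ha.1, haj.not_gt⟩)]
  let partner (f : NoncrossingMatching s) : s' :=
    ⟨f.1 a, mem_erase.2 ⟨f.2.apply_ne_self ha.1, f.2.apply_mem ha.1⟩⟩
  calc Nat.card (NoncrossingMatching s)
      = ∑ j : s', Nat.card {f // partner f = j} := by
        rw [← Nat.card_sigma, Nat.card_congr (Equiv.sigmaFiberEquiv partner)]
    _ = ∑ j ∈ s', halfCatalan #{x ∈ s' | x < j} * halfCatalan #{x ∈ s' | j < x} := by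
        rw [← sum_coe_sort s']
        refine sum_congr rfl fun j _ => ?_
        rw [← hfiber j j.2]
        exact Nat.card_congr (Equiv.subtypeEquivRight fun f => Subtype.ext_iff)
    _ = ∑ t ∈ range #s', halfCatalan t * halfCatalan (#s' - 1 - t) :=
        sum_card_filter_lt_card_filter_gt s' fun t u => halfCatalan t * halfCatalan u
    _ = halfCatalan #s := by rw [← halfCatalan_succ, card_erase_add_one ha.1]

end NoncrossingMatching

lemma isNoncrossingMatching_colorClass {n m : ℕ} {f : Fin (2 * n) → Fin (2 * n)}
    {c : Fin (2 * n) → Fin m} (hm : IsColoredMatching n m f c) (hnc : IsNoncrossing n m f c)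
    (k : Fin m) :
    IsNoncrossingMatching {i | c i = k} (({i | c i = k} : Finset _).piecewise f id) := by
  refine isNoncrossingMatching_piecewise (fun i hi => ?_) (fun i _ => hm.1 i) (fun i _ => hm.2.1 i)
    fun i hi j hj hij hjf => not_lt.1 fun hff => hnc ⟨i, j, ?_, hij, hjf, hff⟩
  · simpa only [mem_filter, mem_univ, true_and, hm.2.2] using hi
  · rw [(mem_filter.1 hi).2, (mem_filter.1 hj).2]

lemma isColoredMatching_and_isNoncrossing_of_colorClasses {n m : ℕ} (c : Fin (2 * n) → Fin m)
    (g : ∀ k, NoncrossingMatching ({i | c i = k} : Finset _)) :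
    IsColoredMatching n m (fun i => (g (c i)).1 i) c ∧
      IsNoncrossing n m (fun i => (g (c i)).1 i) c := by
  have hclass : ∀ i, i ∈ ({j | c j = c i} : Finset _) := fun i => mem_filter.2 ⟨mem_univ _, rfl⟩
  have hcolor : ∀ i, c ((g (c i)).1 i) = c i := fun i =>
    (mem_filter.1 ((g _).2.apply_mem (hclass i))).2
  have hclass_eq : ∀ {i j}, c i = c j → (g (c i)).1 = (g (c j)).1 := fun h => by rw [h]
  refine ⟨⟨fun i => ?_, fun i => (g _).2.apply_ne_self (hclass i), hcolor⟩, ?_⟩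
  · dsimp only
    rw [hclass_eq (hcolor i)]
    exact (g _).2.involutive i
  · rintro ⟨i, j, hc, hij, hjf, hff⟩
    dsimp only at hjf hff
    rw [← hclass_eq hc] at hff
    exact ((g _).2.noncrossing i j hij hjf).not_gt hff

def coloredNoncrossingMatchingEquiv (n m : ℕ) :
    {p : (Fin (2 * n) → Fin (2 * n)) × (Fin (2 * n) → Fin m) //
        IsColoredMatching n m p.1 p.2 ∧ IsNoncrossing n m p.1 p.2} ≃
      Σ c : Fin (2 * n) → Fin m, ∀ k, NoncrossingMatching ({i | c i = k} : Finset _) where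
  toFun p := ⟨p.1.2, fun k => ⟨_, isNoncrossingMatching_colorClass p.2.1 p.2.2 k⟩⟩
  invFun g := ⟨(fun i => (g.2 (g.1 i)).1 i, g.1),
    isColoredMatching_and_isNoncrossing_of_colorClasses g.1 g.2⟩
  left_inv p := Subtype.ext (Prod.ext (funext fun i => by
    dsimp only
    exact piecewise_eq_of_mem _ _ _ (mem_filter.2 ⟨mem_univ i, rfl⟩)) rfl)
  right_inv g := by
    refine Sigma.ext rfl (heq_of_eq (funext fun k => Subtype.ext (funext fun i => ?_)))
    dsimp only
    by_cases hi : i ∈ ({i | g.1 i = k} : Finset _)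
    · rw [piecewise_eq_of_mem _ _ _ hi, (mem_filter.1 hi).2]
    · rw [piecewise_eq_of_notMem _ _ _ hi, id, (g.2 k).2.apply_eq_self hi]

theorem card_coloredNoncrossingMatching (n m : ℕ) :
    Nat.card {p : (Fin (2 * n) → Fin (2 * n)) × (Fin (2 * n) → Fin m) //
        IsColoredMatching n m p.1 p.2 ∧ IsNoncrossing n m p.1 p.2} =
      ∑ c : Fin (2 * n) → Fin m, ∏ k, halfCatalan #{i | c i = k} := by
  simp only [Nat.card_congr (coloredNoncrossingMatchingEquiv n m), Nat.card_sigma, Nat.card_pi,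
    card_noncrossingMatching]

lemma sum_fin_two_coloring {ι M : Type*} [Fintype ι] [DecidableEq ι] [AddCommMonoid M]
    (F : Finset ι → Finset ι → M) :
    ∑ c : ι → Fin 2, F {i | c i = 0} {i | c i = 1} = ∑ A : Finset ι, F A Aᶜ := by
  have hone (c : ι → Fin 2) :
      filter (fun i => c i = 1) univ = (filter (fun i => c i = 0) univ)ᶜ := by
    ext i
    simp only [mem_filter, mem_univ, true_and, mem_compl]
    omega
  refine Fintype.sum_bijective (fun c : ι → Fin 2 => filter (fun i => c i = 0) univ)
    ⟨fun c c' h => funext fun i => ?_, fun A => ⟨fun i => if i ∈ A then 0 else 1, ?_⟩⟩ _ _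
    fun c => by rw [hone]
  · have := congrArg (i ∈ ·) h
    simp only [mem_filter, mem_univ, true_and, eq_iff_iff] at this
    omega
  · ext i
    by_cases hi : i ∈ A <;> simp [hi]

theorem stmt1 (n : ℕ) :
    Nat.card {p : (Fin (2*n) → Fin (2*n)) × (Fin (2*n) → Fin 2) //
        IsColoredMatching n 2 p.1 p.2 ∧ IsNoncrossing n 2 p.1 p.2} =
      catalan n * catalan (n + 1) := by
  rw [card_coloredNoncrossingMatching]
  simp only [Fin.prod_univ_two]
  rw [sum_fin_two_coloring fun A B => halfCatalan #A * halfCatalan #B]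
  simp only [card_compl, Fintype.card_fin]
  rw [← powerset_univ, sum_powerset_apply_card fun k => halfCatalan k * halfCatalan (2 * n - k),
    card_univ, Fintype.card_fin]
  simp only [smul_eq_mul]
  rw [← Nat.sum_antidiagonal_eq_sum_range_succ
      fun i j => (2 * n).choose i * (halfCatalan i * halfCatalan j),
    sum_antidiagonal_two_mul_mul_halfCatalan n fun i _ => (2 * n).choose i,
    sum_antidiagonal_choose_mul_catalan]
end

section
/- The number of oscillating tableaux (i.e., oscillating 1-rim hook tableaux) of length 2n equals (2n-1)!!. -/
/-!
Young's lattice is a `1`-differential lattice: it is distributive, hence modular, and every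
diagram has exactly one more addable row than removable rows (the addable rows are the first one
and those just below a removable row). Modularity turns the two-step paths `a ⋖ b ⋗ c` and
`a ⋗ b ⋖ c` with `a ≠ c` into each other via `b ↦ a ⊓ c` and `b ↦ a ⊔ c`, so Stanley's operators
satisfy `DU = UD + I`. For the vector `w k` of walk counts from `∅` this gives
`D (w (k + 1)) = (k + 1) • w k`, and since `∅` covers nothing, a closed walk of length `2n + 2`
ends with a down step: `w (2n + 2) ∅ = (2n + 1) * w (2n) ∅`.
-/

/-- `lam` is obtained from `μ` by adding a single cell. -/
def IsCellAdd (μ lam : YoungDiagram) : Prop :=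
  μ ≤ lam ∧ (lam.cells \ μ.cells).card = 1

/-- An oscillating tableau of length `2n`: consecutive shapes differ by one cell. -/
def IsOscTableau (n : ℕ) (T : Fin (2*n + 1) → YoungDiagram) : Prop :=
  T 0 = ⊥ ∧ T (Fin.last (2*n)) = ⊥ ∧
  ∀ i : Fin (2*n), IsCellAdd (T i.castSucc) (T i.succ) ∨ IsCellAdd (T i.succ) (T i.castSucc)

open Finset

/-- Stanley's `1`-differential posets, restricted to lattices: axiom (D1) follows from weak
modularity, which is assumed separately where it is needed. -/
class DifferentialLattice (α : Type*) [Lattice α] where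
  upCovers : α → Finset α
  downCovers : α → Finset α
  mem_upCovers {a b : α} : b ∈ upCovers a ↔ a ⋖ b
  mem_downCovers {a b : α} : b ∈ downCovers a ↔ b ⋖ a
  card_upCovers (a : α) : #(upCovers a) = #(downCovers a) + 1

namespace DifferentialLattice

variable {α : Type*} [Lattice α] [DifferentialLattice α]

-- Stanley's operators `U` and `D`, acting on coefficient vectors `f : α → ℕ`.
def up : (α → ℕ) →ₗ[ℕ] (α → ℕ) :=
  LinearMap.pi fun a => ∑ b ∈ downCovers a, LinearMap.proj b

def down : (α → ℕ) →ₗ[ℕ] (α → ℕ) :=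
  LinearMap.pi fun a => ∑ b ∈ upCovers a, LinearMap.proj b

lemma up_apply (f : α → ℕ) (a : α) : up f a = ∑ b ∈ downCovers a, f b := by
  simp [up]

lemma down_apply (f : α → ℕ) (a : α) : down f a = ∑ b ∈ upCovers a, f b := by
  simp [down]

lemma sum_upCovers_sum_downCovers_erase [IsWeakUpperModularLattice α]
    [IsWeakLowerModularLattice α] [DecidableEq α] {M : Type*} [AddCommMonoid M]
    (f : α → M) (a : α) :
    ∑ b ∈ upCovers a, ∑ c ∈ (downCovers b).erase a, f c =
      ∑ b ∈ downCovers a, ∑ c ∈ (upCovers b).erase a, f c := by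
  rw [sum_sigma', sum_sigma']
  refine sum_nbij' (fun p => ⟨a ⊓ p.2, p.2⟩) (fun p => ⟨a ⊔ p.2, p.2⟩) ?_ ?_ ?_ ?_
    fun _ _ => rfl
  all_goals
    rintro ⟨b, c⟩ hbc
    simp only [mem_sigma, mem_erase, mem_upCovers, mem_downCovers] at hbc
    obtain ⟨hab, hca, hcb⟩ := hbc
  · have hsup : a ⊔ c = b := hab.wcovBy.sup_eq hcb.wcovBy (Ne.symm hca)
    rw [← hsup] at hab hcb
    simp only [mem_sigma, mem_erase, mem_upCovers, mem_downCovers]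
    exact ⟨inf_covBy_of_covBy_sup_of_covBy_sup_left hab hcb, hca,
      inf_covBy_of_covBy_sup_of_covBy_sup_right hab hcb⟩
  · have hinf : a ⊓ c = b := hab.wcovBy.inf_eq hcb.wcovBy (Ne.symm hca)
    rw [← hinf] at hab hcb
    simp only [mem_sigma, mem_erase, mem_upCovers, mem_downCovers]
    exact ⟨covBy_sup_of_inf_covBy_of_inf_covBy_left hab hcb, hca,
      covBy_sup_of_inf_covBy_of_inf_covBy_right hab hcb⟩
  · simp [hab.wcovBy.sup_eq hcb.wcovBy (Ne.symm hca)]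
  · simp [hab.wcovBy.inf_eq hcb.wcovBy (Ne.symm hca)]

theorem down_up [IsWeakUpperModularLattice α] [IsWeakLowerModularLattice α] (f : α → ℕ) :
    down (up f) = up (down f) + f := by
  classical
  ext a
  have hdu : ∀ b ∈ upCovers a, f a + ∑ c ∈ (downCovers b).erase a, f c =
      ∑ c ∈ downCovers b, f c :=
    fun b hb => add_sum_erase _ f (mem_downCovers.2 (mem_upCovers.1 hb))
  have hud : ∀ b ∈ downCovers a, f a + ∑ c ∈ (upCovers b).erase a, f c =
      ∑ c ∈ upCovers b, f c :=
    fun b hb => add_sum_erase _ f (mem_upCovers.2 (mem_downCovers.1 hb))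
  simp only [down_apply, up_apply, Pi.add_apply]
  rw [← sum_congr rfl hdu, ← sum_congr rfl hud, sum_add_distrib, sum_add_distrib,
    sum_upCovers_sum_downCovers_erase, sum_const, sum_const, card_upCovers]
  ring

section Walks

variable [OrderBot α]

lemma downCovers_bot : downCovers (⊥ : α) = ∅ :=
  eq_empty_of_forall_notMem fun _ hb => not_lt_bot (mem_downCovers.1 hb).lt

lemma bot_notMem_upCovers (a : α) : ⊥ ∉ upCovers a :=
  fun h => not_lt_bot (mem_upCovers.1 h).lt

variable [DecidableEq α]

def hasseWalks : (k : ℕ) → α → Finset (Fin (k + 1) → α)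
  | 0, a => if a = ⊥ then {fun _ => ⊥} else ∅
  | k + 1, a => (downCovers a ∪ upCovers a).biUnion fun b =>
      (hasseWalks k b).image fun T => Fin.snoc T a

lemma mem_hasseWalks {k : ℕ} {a : α} {T : Fin (k + 1) → α} :
    T ∈ hasseWalks k a ↔
      T 0 = ⊥ ∧ T (Fin.last k) = a ∧
        ∀ i : Fin k, (SimpleGraph.hasse α).Adj (T i.castSucc) (T i.succ) := by
  induction k generalizing a with
  | zero =>
    simp only [hasseWalks, Fin.last_zero, IsEmpty.forall_iff, and_true]
    split_ifs with ha
    · simp [funext_iff, Fin.forall_fin_one, ha, eq_comm]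
    · simp only [notMem_empty, false_iff, not_and]
      exact fun h0 h => ha (h ▸ h0)
  | succ k ih =>
    simp only [hasseWalks, mem_biUnion, mem_image, mem_union, mem_downCovers, mem_upCovers, ih]
    constructor
    · rintro ⟨b, hb, S, ⟨hS0, hSb, hS⟩, rfl⟩
      refine ⟨by simpa using hS0, Fin.snoc_last _ _, Fin.forall_fin_succ'.2 ⟨fun i => ?_, ?_⟩⟩
      · rw [Fin.succ_castSucc, Fin.snoc_castSucc, Fin.snoc_castSucc]
        exact hS i
      · simpa [hSb, SimpleGraph.hasse_adj, or_comm] using hb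
    · rintro ⟨hT0, rfl, hT⟩
      obtain ⟨hT, hlast⟩ := Fin.forall_fin_succ'.1 hT
      refine ⟨T (Fin.last k).castSucc, by simpa [SimpleGraph.hasse_adj, or_comm] using hlast,
        Fin.init T, ⟨hT0, rfl, fun i => by
          simpa only [Fin.init, Fin.succ_castSucc] using hT i⟩,
        Fin.snoc_init_self T⟩

lemma card_hasseWalks_succ (k : ℕ) (a : α) :
    #(hasseWalks (k + 1) a) = ∑ b ∈ downCovers a ∪ upCovers a, #(hasseWalks k b) := by
  rw [hasseWalks, card_biUnion]
  · refine sum_congr rfl fun b _ => card_image_of_injective _ fun S S' h => ?_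
    simpa using congrArg Fin.init h
  · refine fun b _ c _ hbc => disjoint_left.2 fun T hb hc => hbc ?_
    obtain ⟨S, hS, rfl⟩ := mem_image.1 hb
    obtain ⟨S', hS', hSS'⟩ := mem_image.1 hc
    have := congrFun hSS' (Fin.last k).castSucc
    rwa [Fin.snoc_castSucc, Fin.snoc_castSucc, (mem_hasseWalks.1 hS).2.1,
      (mem_hasseWalks.1 hS').2.1, eq_comm] at this

def walkCount (k : ℕ) (a : α) : ℕ := #(hasseWalks k a)

lemma walkCount_succ (k : ℕ) :
    walkCount (k + 1) = up (walkCount k) + down (walkCount (α := α) k) := by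
  ext a
  have hdisj : Disjoint (downCovers a) (upCovers a) := disjoint_left.2 fun b hb hb' =>
    (mem_downCovers.1 hb).lt.not_gt (mem_upCovers.1 hb').lt
  rw [walkCount, card_hasseWalks_succ, sum_union hdisj, Pi.add_apply, up_apply, down_apply]
  rfl

lemma down_walkCount_zero : down (walkCount (α := α) 0) = 0 := by
  ext a
  refine (down_apply _ a).trans (sum_eq_zero fun b hb => ?_)
  simp [walkCount, hasseWalks, ne_of_mem_of_not_mem hb (bot_notMem_upCovers a)]

lemma down_walkCount_succ [IsWeakUpperModularLattice α] [IsWeakLowerModularLattice α] (k : ℕ) :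
    down (walkCount (α := α) (k + 1)) = (k + 1) • walkCount k := by
  induction k with
  | zero => simp [walkCount_succ, down_up, down_walkCount_zero]
  | succ k ih =>
    rw [walkCount_succ (k + 1), map_add, down_up, ih, map_nsmul, map_nsmul, walkCount_succ k]
    module

lemma walkCount_two_mul_bot [IsWeakUpperModularLattice α] [IsWeakLowerModularLattice α]
    (n : ℕ) : walkCount (2 * n) (⊥ : α) = ∏ i ∈ range n, (2 * i + 1) := by
  induction n with
  | zero => simp [walkCount, hasseWalks]
  | succ n ih =>
    rw [show 2 * (n + 1) = 2 * n + 1 + 1 by ring, walkCount_succ, Pi.add_apply, up_apply,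
      downCovers_bot, sum_empty, down_walkCount_succ, Pi.smul_apply, ih, prod_range_succ]
    simp [mul_comm]

end Walks

end DifferentialLattice

lemma IsLowerSet.insert_of_forall_lt_mem {β : Type*} [PartialOrder β] {s : Set β} {a : β}
    (hs : IsLowerSet s) (h : ∀ b < a, b ∈ s) : IsLowerSet (insert a s) := by
  rintro b c hcb (rfl | hb)
  · exact hcb.lt_or_eq.elim (fun hlt => Or.inr (h c hlt)) Or.inl
  · exact Or.inr (hs hcb hb)

namespace YoungDiagram

instance : DecidableEq YoungDiagram := fun _ _ => decidable_of_iff _ YoungDiagram.ext_iff.symm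

variable {μ ν : YoungDiagram} {i j : ℕ}

lemma covBy_of_cells_eq_insert {c : ℕ × ℕ} (hc : c ∉ μ) (h : ν.cells = insert c μ.cells) :
    μ ⋖ ν := by
  have hcard : #ν.cells = #μ.cells + 1 := by rw [h, card_insert_of_notMem (by simpa using hc)]
  refine ⟨cells_ssubset_iff.1 (h ▸ ssubset_insert (by simpa using hc)), fun κ hμκ hκν => ?_⟩
  have := card_lt_card (cells_ssubset_iff.2 hμκ)
  have := card_lt_card (cells_ssubset_iff.2 hκν)
  omega

def Addable (μ : YoungDiagram) (i : ℕ) : Prop :=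
  i = 0 ∨ μ.rowLen i < μ.rowLen (i - 1)

def Removable (μ : YoungDiagram) (i : ℕ) : Prop :=
  μ.rowLen (i + 1) < μ.rowLen i

instance (μ : YoungDiagram) : DecidablePred μ.Addable :=
  fun _ => inferInstanceAs (Decidable (_ ∨ _))

instance (μ : YoungDiagram) : DecidablePred μ.Removable :=
  fun _ => inferInstanceAs (Decidable (_ < _))

lemma addable_zero : μ.Addable 0 := Or.inl rfl

lemma addable_succ_iff : μ.Addable (i + 1) ↔ μ.Removable i := by
  simp [Addable, Removable]

lemma Removable.lt_colLen (h : μ.Removable i) : i < μ.colLen 0 :=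
  mem_iff_lt_colLen.1 (mem_iff_lt_rowLen.2 (Nat.zero_lt_of_lt h))

lemma Removable.rowLen_pos (h : μ.Removable i) : 0 < μ.rowLen i := Nat.zero_lt_of_lt h

lemma Addable.mem_of_lt (h : μ.Addable i) {d : ℕ × ℕ} (hd : d < (i, μ.rowLen i)) : d ∈ μ := by
  obtain ⟨a, b⟩ := d
  rw [mem_iff_lt_rowLen]
  rcases Prod.lt_iff.1 hd with ⟨ha, hb⟩ | ⟨ha, hb⟩ <;> dsimp only at ha hb
  · have hprev := h.resolve_left (by omega)
    have := μ.rowLen_anti a (i - 1) (by omega)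
    omega
  · have := μ.rowLen_anti a i ha
    omega

lemma addable_of_forall_lt_mem (hc : (i, j) ∉ μ) (h : ∀ d < (i, j), d ∈ μ) :
    μ.Addable i ∧ j = μ.rowLen i := by
  rw [mem_iff_lt_rowLen, not_lt] at hc
  have hj : j ≤ μ.rowLen i := by
    rcases Nat.eq_zero_or_pos j with rfl | hj
    · exact Nat.zero_le _
    · have := mem_iff_lt_rowLen.1 (h (i, j - 1) (Prod.mk_lt_mk_of_le_of_lt le_rfl (by omega)))
      omega
  refine ⟨?_, le_antisymm hj hc⟩
  rcases Nat.eq_zero_or_pos i with rfl | hi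
  · exact addable_zero
  · have := mem_iff_lt_rowLen.1 (h (i - 1, j) (Prod.mk_lt_mk_of_lt_of_le (by omega) le_rfl))
    exact Or.inr (by omega)

lemma Removable.eq_of_le (h : μ.Removable i) {d : ℕ × ℕ} (hd : d ∈ μ)
    (hle : (i, μ.rowLen i - 1) ≤ d) : d = (i, μ.rowLen i - 1) := by
  obtain ⟨a, b⟩ := d
  obtain ⟨ha, hb⟩ := Prod.mk_le_mk.1 hle
  rw [mem_iff_lt_rowLen] at hd
  obtain rfl : i = a := by
    by_contra hne
    have := μ.rowLen_anti (i + 1) a (by omega)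
    unfold Removable at h
    omega
  simp only [Prod.mk.injEq, true_and]
  omega

lemma removable_of_forall_le_eq (hc : (i, j) ∈ μ) (h : ∀ d ∈ μ, (i, j) ≤ d → d = (i, j)) :
    μ.Removable i ∧ j = μ.rowLen i - 1 := by
  have hright : (i, j + 1) ∉ μ := fun hd => by simpa using h _ hd (by simp)
  have hbelow : (i + 1, j) ∉ μ := fun hd => by simpa using h _ hd (by simp)
  rw [mem_iff_lt_rowLen] at hc hright hbelow
  exact ⟨by unfold Removable; omega, by omega⟩

def addCell (μ : YoungDiagram) (i : ℕ) : YoungDiagram :=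
  if h : μ.Addable i then
    { cells := insert (i, μ.rowLen i) μ.cells
      isLowerSet := by
        rw [coe_insert]
        exact μ.isLowerSet.insert_of_forall_lt_mem fun _ hd => h.mem_of_lt hd }
  else μ

def removeCell (μ : YoungDiagram) (i : ℕ) : YoungDiagram :=
  if h : μ.Removable i then
    { cells := μ.cells.erase (i, μ.rowLen i - 1)
      isLowerSet := by
        rw [coe_erase]
        exact μ.isLowerSet.erase fun _ hd hle => h.eq_of_le hd hle }
  else μ

lemma cells_addCell (h : μ.Addable i) : (μ.addCell i).cells = insert (i, μ.rowLen i) μ.cells := by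
  rw [addCell, dif_pos h]

lemma cells_removeCell (h : μ.Removable i) :
    (μ.removeCell i).cells = μ.cells.erase (i, μ.rowLen i - 1) := by
  rw [removeCell, dif_pos h]

lemma covBy_addCell (h : μ.Addable i) : μ ⋖ μ.addCell i :=
  covBy_of_cells_eq_insert (by simp [mem_iff_lt_rowLen]) (cells_addCell h)

lemma covBy_removeCell (h : μ.Removable i) : μ.removeCell i ⋖ μ := by
  refine covBy_of_cells_eq_insert (c := (i, μ.rowLen i - 1)) ?_ ?_
  · simp [← mem_cells, cells_removeCell h]
  · rw [cells_removeCell h, insert_erase (by simp [mem_iff_lt_rowLen, h.rowLen_pos])]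

lemma covBy_iff_exists_addCell : μ ⋖ ν ↔ ∃ i, μ.Addable i ∧ μ.addCell i = ν := by
  refine ⟨fun h => ?_, fun ⟨i, hi, hν⟩ => hν ▸ covBy_addCell hi⟩
  -- a minimal cell of `ν \ μ` can be added to `μ`
  obtain ⟨⟨i, j⟩, hc, hmin⟩ := exists_minimal
    (sdiff_nonempty.2 (mt cells_subset_iff.1 h.lt.not_ge))
  rw [mem_sdiff, mem_cells, mem_cells] at hc
  have hlt : ∀ d < (i, j), d ∈ μ := fun d hd => by
    by_contra hdμ
    exact hd.not_ge (hmin (by simpa [hdμ] using ν.isLowerSet hd.le hc.1) hd.le)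
  obtain ⟨hi, rfl⟩ := addable_of_forall_lt_mem hc.2 hlt
  refine ⟨i, hi, ((h.eq_or_eq (covBy_addCell hi).le ?_).resolve_left (covBy_addCell hi).ne')⟩
  rw [← cells_subset_iff, cells_addCell hi]
  exact insert_subset ((mem_cells _).2 hc.1) (cells_subset_iff.2 h.le)

lemma covBy_iff_exists_removeCell : ν ⋖ μ ↔ ∃ i, μ.Removable i ∧ μ.removeCell i = ν := by
  refine ⟨fun h => ?_, fun ⟨i, hi, hν⟩ => hν ▸ covBy_removeCell hi⟩
  -- a maximal cell of `μ \ ν` can be removed from `μ`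
  obtain ⟨⟨i, j⟩, hc, hmax⟩ := exists_maximal
    (sdiff_nonempty.2 (mt cells_subset_iff.1 h.lt.not_ge))
  rw [mem_sdiff, mem_cells, mem_cells] at hc
  have hle : ∀ d ∈ μ, (i, j) ≤ d → d = (i, j) := fun d hd hcd => by
    by_contra hne
    have hdν : d ∈ ν := by
      by_contra hdν
      exact hne (le_antisymm (hmax (by simpa [hdν] using hd) hcd) hcd)
    exact hc.2 (ν.isLowerSet hcd hdν)
  obtain ⟨hi, rfl⟩ := removable_of_forall_le_eq hc.1 hle
  refine ⟨i, hi, ((h.eq_or_eq ?_ (covBy_removeCell hi).le).resolve_right (covBy_removeCell hi).ne)⟩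
  rw [← cells_subset_iff, cells_removeCell hi]
  exact fun d hd => mem_erase.2 ⟨fun h => hc.2 (h ▸ hd), cells_subset_iff.2 h.le hd⟩

lemma isCellAdd_iff_covBy : IsCellAdd μ ν ↔ μ ⋖ ν := by
  constructor
  · rintro ⟨hle, hcard⟩
    obtain ⟨c, hc⟩ := card_eq_one.1 hcard
    have hcμ : c ∉ μ := fun h => by simpa [h] using hc.symm.subset (mem_singleton_self c)
    refine covBy_of_cells_eq_insert hcμ ?_
    rw [← sdiff_union_of_subset (cells_subset_iff.2 hle), hc, insert_eq]
  · intro h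
    obtain ⟨i, hi, rfl⟩ := covBy_iff_exists_addCell.1 h
    refine ⟨h.le, ?_⟩
    rw [cells_addCell hi, insert_sdiff_cancel (by simp [mem_iff_lt_rowLen]), card_singleton]

def removableRows (μ : YoungDiagram) : Finset ℕ := {i ∈ range (μ.colLen 0) | μ.Removable i}

def addableRows (μ : YoungDiagram) : Finset ℕ := insert 0 ((removableRows μ).image (· + 1))

lemma mem_removableRows : i ∈ μ.removableRows ↔ μ.Removable i := by
  simpa [removableRows] using fun h => h.lt_colLen

lemma mem_addableRows : i ∈ μ.addableRows ↔ μ.Addable i := by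
  cases i <;> simp [addableRows, mem_removableRows, addable_zero, addable_succ_iff]

lemma card_addableRows : #μ.addableRows = #μ.removableRows + 1 := by
  rw [addableRows, card_insert_of_notMem (by simp),
    card_image_of_injective _ (add_left_injective 1)]

lemma addCell_injOn : Set.InjOn μ.addCell {i | μ.Addable i} := fun i hi i' hi' h => by
  have hmem := mem_insert_self (i, μ.rowLen i) μ.cells
  rw [← cells_addCell hi, h, cells_addCell hi', mem_insert] at hmem
  exact hmem.elim (congrArg Prod.fst) fun h => absurd h (by simp [mem_iff_lt_rowLen])

lemma removeCell_injOn : Set.InjOn μ.removeCell {i | μ.Removable i} := fun i hi i' hi' h => by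
  have hmem := notMem_erase (i, μ.rowLen i - 1) μ.cells
  rw [← cells_removeCell hi, h, cells_removeCell hi', mem_erase] at hmem
  by_contra hne
  exact hmem ⟨fun h => hne (congrArg Prod.fst h),
    by simp [mem_iff_lt_rowLen, Removable.rowLen_pos (show μ.Removable i from hi)]⟩

instance : DifferentialLattice YoungDiagram where
  upCovers μ := μ.addableRows.image μ.addCell
  downCovers μ := μ.removableRows.image μ.removeCell
  mem_upCovers := by simp [covBy_iff_exists_addCell, mem_addableRows]
  mem_downCovers := by simp [covBy_iff_exists_removeCell, mem_removableRows]
  card_upCovers μ := by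
    rw [card_image_of_injOn fun i hi i' hi' => addCell_injOn (mem_addableRows.1 hi)
      (mem_addableRows.1 hi'), card_image_of_injOn fun i hi i' hi' => removeCell_injOn
      (mem_removableRows.1 hi) (mem_removableRows.1 hi'), card_addableRows]

lemma isOscTableau_iff_mem_hasseWalks {n : ℕ} {T : Fin (2 * n + 1) → YoungDiagram} :
    IsOscTableau n T ↔ T ∈ DifferentialLattice.hasseWalks (2 * n) ⊥ := by
  simp only [IsOscTableau, DifferentialLattice.mem_hasseWalks, SimpleGraph.hasse_adj,
    isCellAdd_iff_covBy]

end YoungDiagram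

/-- The number of oscillating tableaux of length `2n` is `(2n-1)!! = 1·3·5⋯(2n-1)`. -/
theorem stmt4 (n : ℕ) :
    Nat.card {T : Fin (2*n + 1) → YoungDiagram // IsOscTableau n T} =
      ∏ i ∈ Finset.range n, (2 * i + 1) := by
  rw [Nat.card_congr <| Equiv.subtypeEquivRight fun _ =>
      YoungDiagram.isOscTableau_iff_mem_hasseWalks, Nat.card_eq_fintype_card, Fintype.card_coe]
  exact DifferentialLattice.walkCount_two_mul_bot n
end

section
/- If (λ^0,...,λ^{2n}) is a sequence of partitions each with at most two rows, written λ^i = (u_i, v_i) with u_i ≥ v_i ≥ 0, with λ^0 = λ^{2n} = (0,0), and consecutive partitions differ by a domino move (either one coordinate changes by 2, or both coordinates change by 1 with u_i = v_i and u_{i+1} = v_{i+1}), then both u_i + v_i and u_i - v_i are even for all i, and the sequences a_i = (u_i+v_i)/2 and b_i = (u_i-v_i)/2 satisfy: a_{i+1} - a_i ∈ {1,-1}, b_{i+1} - b_i ∈ {1,0,-1}, b_{i+1} = b_i only when b_i = 0, and 0 ≤ b_i ≤ a_i. -/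
/-- A domino move on partitions with at most two rows. -/
def DominoMove (p q : ℕ × ℕ) : Prop :=
  (p.2 = q.2 ∧ (q.1 = p.1 + 2 ∨ p.1 = q.1 + 2)) ∨
  (p.1 = q.1 ∧ (q.2 = p.2 + 2 ∨ p.2 = q.2 + 2)) ∨
  (p.1 = p.2 ∧ q.1 = q.2 ∧ (q.1 = p.1 + 1 ∨ p.1 = q.1 + 1))

/-- Properties of the path heights `a_i = (u_i+v_i)/2`, `b_i = (u_i-v_i)/2` associated
with a two-row oscillating domino sequence. -/
theorem stmt12 (n : ℕ) (u v : Fin (2*n + 1) → ℕ)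
    (hge : ∀ i, v i ≤ u i)
    (h0 : u 0 = 0 ∧ v 0 = 0) (hlast : u (Fin.last (2*n)) = 0 ∧ v (Fin.last (2*n)) = 0)
    (hstep : ∀ i : Fin (2*n), DominoMove (u i.castSucc, v i.castSucc) (u i.succ, v i.succ)) :
    (∀ i, Even (u i + v i) ∧ Even (u i - v i)) ∧
    (∀ i : Fin (2*n),
      ((u i.succ + v i.succ) / 2 = (u i.castSucc + v i.castSucc) / 2 + 1 ∨
        (u i.castSucc + v i.castSucc) / 2 = (u i.succ + v i.succ) / 2 + 1) ∧
      ((u i.succ - v i.succ) / 2 = (u i.castSucc - v i.castSucc) / 2 + 1 ∨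
        (u i.castSucc - v i.castSucc) / 2 = (u i.succ - v i.succ) / 2 + 1 ∨
        ((u i.succ - v i.succ) / 2 = (u i.castSucc - v i.castSucc) / 2 ∧
          (u i.castSucc - v i.castSucc) / 2 = 0))) ∧
    (∀ i, (u i - v i) / 2 ≤ (u i + v i) / 2) := by
  have key : ∀ k (h : k < 2*n+1), Even (u ⟨k, h⟩ + v ⟨k, h⟩) ∧ Even (u ⟨k, h⟩ - v ⟨k, h⟩) := by
    intro k
    induction k with
    | zero =>
      intro h
      have : (⟨0, h⟩ : Fin (2*n+1)) = 0 := rfl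
      rw [this, h0.1, h0.2]
      simp
    | succ k ih =>
      intro h
      have hk : k < 2*n+1 := Nat.lt_of_succ_lt h
      have hk2 : k < 2*n := by omega
      have hs : DominoMove (u ⟨k, hk⟩, v ⟨k, hk⟩) (u ⟨k+1, h⟩, v ⟨k+1, h⟩) := hstep ⟨k, hk2⟩
      have ihk := ih hk
      have h1 := hge ⟨k, hk⟩
      have h2 := hge (⟨k+1, h⟩ : Fin (2*n+1))
      rw [Nat.even_iff, Nat.even_iff] at ihk ⊢
      rcases hs with ⟨e, e1 | e1⟩ | ⟨e, e1 | e1⟩ | ⟨e, e', e1 | e1⟩ <;>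
        simp only at e e1 <;> omega
  refine ⟨fun i => key i.1 i.isLt, fun i => ?_, fun i => ?_⟩
  · have hs := hstep i
    have h1 := hge i.castSucc
    have h2 := hge i.succ
    rcases hs with ⟨e, e1 | e1⟩ | ⟨e, e1 | e1⟩ | ⟨e, e', e1 | e1⟩ <;>
      simp only at e e1 <;> omega
  · exact Nat.div_le_div_right (le_trans (Nat.sub_le _ _) (Nat.le_add_right _ _))
end

section
/- The number of noncrossing partial matchings of {1,...,2n} whose arcs form a perfect matching (every point matched) with no two arcs crossing equals C_n, and consequently the number of pairs (M1, M2) where M1 and M2 are noncrossing partial matchings on {1,...,2n} that partition {1,...,2n} into matched pairs (each point belongs to exactly one arc of M1 ∪ M2) equals C_n * C_{n+1}. -/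
/-!
In a noncrossing perfect matching of a finite chain `S`, the minimum `a` is matched to some `b`,
and no arc crosses `(a, b)`; so the remaining arcs form a noncrossing perfect matching of the
points strictly between `a` and `b` together with one of the points after `b`. The number of such
matchings depends only on `#S` (transport along the order isomorphism with `Fin #S`), so this is
the Catalan recursion, and a chain of `2n` points has `C_n` of them.

For the pairs, `M₁ ∪ M₂` is a perfect matching exactly when the support `T` of `M₁` and the support
`S \ T` of `M₂` partition `S`. Summing over `T` gives `∑ᵢ C(2n, 2i) Cᵢ C_{n-i}`, and this is
`C_n C_{n+1}` since `C(2n, 2i) Cᵢ C_{n-i} = (2n)! / (n+1)!² · C(n+1, i) C(n+1, i+1)`, whose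
last factor sums to `C(2n+2, n)` by Vandermonde's identity.
-/

/-- A partial matching on `Fin (2n)`: a set of arcs `(i,j)` with `i < j`, pairwise
disjoint. -/
def IsPartialMatching (n : ℕ) (M : Finset (Fin (2*n) × Fin (2*n))) : Prop :=
  (∀ p ∈ M, p.1 < p.2) ∧
  ∀ p ∈ M, ∀ q ∈ M, p ≠ q → p.1 ≠ q.1 ∧ p.1 ≠ q.2 ∧ p.2 ≠ q.1 ∧ p.2 ≠ q.2

/-- The partial matching `M` has no crossing arcs. -/
def IsNoncrossingPM (n : ℕ) (M : Finset (Fin (2*n) × Fin (2*n))) : Prop :=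
  ¬ ∃ p ∈ M, ∃ q ∈ M, p.1 < q.1 ∧ q.1 < p.2 ∧ p.2 < q.2

/-- The arcs of `M` cover every point. -/
def IsPerfect (n : ℕ) (M : Finset (Fin (2*n) × Fin (2*n))) : Prop :=
  ∀ x : Fin (2*n), ∃ p ∈ M, x = p.1 ∨ x = p.2

open Finset
open scoped Nat

theorem cast_catalan_eq_factorial_div (n : ℕ) :
    (catalan n : ℚ) = (2 * n)! / (n ! * (n + 1)!) := by
  have h := congrArg (Nat.cast : ℕ → ℚ) (succ_mul_catalan_eq_centralBinom n)
  rw [Nat.centralBinom_eq_two_mul_choose, Nat.cast_choose ℚ (by omega),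
    show 2 * n - n = n by omega] at h
  rw [Nat.factorial_succ, eq_div_iff (by positivity)]
  push_cast at h ⊢
  field_simp at h
  linear_combination h

theorem cast_choose_mul_catalan_mul_catalan (i j : ℕ) :
    ((2 * (i + j)).choose (2 * i) * (catalan i * catalan j) : ℚ) =
      (2 * (i + j))! / (i + j + 1)! ^ 2 * ((i + j + 1).choose i * (i + j + 1).choose (i + 1)) := by
  rw [Nat.cast_choose ℚ (by omega), Nat.cast_choose ℚ (by omega), Nat.cast_choose ℚ (by omega),
    cast_catalan_eq_factorial_div, cast_catalan_eq_factorial_div,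
    show 2 * (i + j) - 2 * i = 2 * j by omega, show i + j + 1 - i = j + 1 by omega,
    show i + j + 1 - (i + 1) = j by omega]
  field_simp

theorem sum_choose_mul_choose_succ (n : ℕ) :
    ∑ i ∈ range (n + 1), (n + 1).choose i * (n + 1).choose (i + 1) = (2 * n + 2).choose n := by
  rw [show 2 * n + 2 = (n + 1) + (n + 1) by ring, Nat.add_choose_eq,
    Nat.sum_antidiagonal_eq_sum_range_succ (fun a b => (n + 1).choose a * (n + 1).choose b)]
  refine sum_congr rfl fun i hi => ?_
  rw [Nat.choose_symm_of_eq_add (show n + 1 = (n - i) + (i + 1) by grind)]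

theorem sum_choose_mul_catalan_mul_catalan (n : ℕ) :
    ∑ i ∈ range (n + 1), (2 * n).choose (2 * i) * (catalan i * catalan (n - i)) =
      catalan n * catalan (n + 1) := by
  have hterm (i) (hi : i ∈ range (n + 1)) :
      ((2 * n).choose (2 * i) * (catalan i * catalan (n - i)) : ℚ) =
        (2 * n)! / (n + 1)! ^ 2 * ((n + 1).choose i * (n + 1).choose (i + 1)) := by
    obtain ⟨j, rfl⟩ := Nat.exists_eq_add_of_le (Nat.lt_succ_iff.mp (mem_range.mp hi))
    rw [Nat.add_sub_cancel_left]
    exact cast_choose_mul_catalan_mul_catalan i j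
  have hsum := congrArg (Nat.cast : ℕ → ℚ) (sum_choose_mul_choose_succ n)
  push_cast at hsum
  rw [← Nat.cast_inj (R := ℚ)]
  push_cast
  rw [sum_congr rfl hterm, ← mul_sum, hsum, Nat.cast_choose ℚ (by omega),
    cast_catalan_eq_factorial_div, cast_catalan_eq_factorial_div,
    show 2 * n + 2 - n = n + 2 by omega, show 2 * (n + 1) = 2 * n + 2 by ring]
  simp only [Nat.factorial_succ]
  push_cast
  field_simp

theorem sum_range_two_mul_add_one_of_odd {M : Type*} [AddCommMonoid M] (f : ℕ → M)
    (hf : ∀ k, Odd k → f k = 0) (n : ℕ) :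
    ∑ k ∈ range (2 * n + 1), f k = ∑ i ∈ range (n + 1), f (2 * i) := by
  induction n with
  | zero => simp
  | succ n ih =>
    rw [show 2 * (n + 1) + 1 = 2 * n + 1 + 1 + 1 by ring, sum_range_succ, sum_range_succ, ih,
      hf _ (odd_two_mul_add_one n), add_zero, sum_range_succ _ (n + 1)]
    rfl

namespace NoncrossingMatching

variable {α β : Type*} [LinearOrder α] [LinearOrder β]

/- `IsPartialMatching n` and `IsNoncrossingPM n` are `IsMatching` and `IsNoncrossing` on
`Fin (2 * n)`; the decomposition produces matchings of arbitrary subsets of a linear order. -/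
def IsMatching (M : Finset (α × α)) : Prop :=
  (∀ p ∈ M, p.1 < p.2) ∧
  ∀ p ∈ M, ∀ q ∈ M, p ≠ q → p.1 ≠ q.1 ∧ p.1 ≠ q.2 ∧ p.2 ≠ q.1 ∧ p.2 ≠ q.2

def IsNoncrossing (M : Finset (α × α)) : Prop :=
  ¬ ∃ p ∈ M, ∃ q ∈ M, p.1 < q.1 ∧ q.1 < p.2 ∧ p.2 < q.2

def support (M : Finset (α × α)) : Finset α := M.image Prod.fst ∪ M.image Prod.snd

variable {M M₁ M₂ : Finset (α × α)} {S : Finset α} {p q : α × α} {a b x : α}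

theorem mem_support : x ∈ support M ↔ ∃ p ∈ M, x = p.1 ∨ x = p.2 := by
  simp only [support, mem_union, mem_image]
  grind

theorem fst_mem_support (hp : p ∈ M) : p.1 ∈ support M := mem_support.2 ⟨p, hp, .inl rfl⟩

theorem snd_mem_support (hp : p ∈ M) : p.2 ∈ support M := mem_support.2 ⟨p, hp, .inr rfl⟩

theorem support_union : support (M₁ ∪ M₂) = support M₁ ∪ support M₂ := by
  ext; simp only [mem_union, mem_support]; grind

theorem support_singleton : support {(a, b)} = {a, b} := by
  ext; simp [mem_support]

theorem support_eq_empty : support M = ∅ ↔ M = ∅ := by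
  simp [support]

theorem IsMatching.mono (hM : IsMatching M) (h : M₁ ⊆ M) : IsMatching M₁ :=
  ⟨fun p hp => hM.1 p (h hp), fun p hp q hq => hM.2 p (h hp) q (h hq)⟩

theorem IsNoncrossing.mono (hM : IsNoncrossing M) (h : M₁ ⊆ M) : IsNoncrossing M₁ :=
  fun ⟨p, hp, q, hq, hpq⟩ => hM ⟨p, h hp, q, h hq, hpq⟩

theorem IsMatching.eq_of_mem (hM : IsMatching M) (hp : p ∈ M) (hq : q ∈ M)
    (hxp : x = p.1 ∨ x = p.2) (hxq : x = q.1 ∨ x = q.2) : p = q := by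
  by_contra hpq
  have := hM.2 p hp q hq hpq
  grind

theorem isMatching_iff : IsMatching M ↔ (∀ p ∈ M, p.1 < p.2) ∧
    ∀ p ∈ M, ∀ q ∈ M, ∀ x, (x = p.1 ∨ x = p.2) → (x = q.1 ∨ x = q.2) → p = q := by
  refine ⟨fun hM => ⟨hM.1, fun p hp q hq x => hM.eq_of_mem hp hq⟩, fun ⟨hlt, heq⟩ => ⟨hlt, ?_⟩⟩
  intro p hp q hq hpq
  refine ⟨?_, ?_, ?_, ?_⟩ <;> intro h <;> apply hpq
  exacts [heq p hp q hq p.1 (.inl rfl) (.inl h), heq p hp q hq p.1 (.inl rfl) (.inr h),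
    heq p hp q hq p.2 (.inr rfl) (.inl h), heq p hp q hq p.2 (.inr rfl) (.inr h)]

theorem isMatching_singleton (h : a < b) : IsMatching {(a, b)} :=
  ⟨by simpa using h, by simp⟩

theorem IsMatching.union (h₁ : IsMatching M₁) (h₂ : IsMatching M₂)
    (hd : Disjoint (support M₁) (support M₂)) : IsMatching (M₁ ∪ M₂) := by
  refine isMatching_iff.2 ⟨fun p hp => (mem_union.1 hp).elim (h₁.1 p) (h₂.1 p), ?_⟩
  have hx : ∀ p ∈ M₁, ∀ q ∈ M₂, ∀ x, (x = p.1 ∨ x = p.2) → (x = q.1 ∨ x = q.2) → False :=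
    fun p hp q hq x hxp hxq =>
      disjoint_left.1 hd (mem_support.2 ⟨p, hp, hxp⟩) (mem_support.2 ⟨q, hq, hxq⟩)
  intro p hp q hq x hxp hxq
  rcases mem_union.1 hp with hp | hp <;> rcases mem_union.1 hq with hq | hq
  · exact h₁.eq_of_mem hp hq hxp hxq
  · exact (hx p hp q hq x hxp hxq).elim
  · exact (hx q hq p hp x hxq hxp).elim
  · exact h₂.eq_of_mem hp hq hxp hxq

theorem disjoint_of_disjoint_support (hd : Disjoint (support M₁) (support M₂)) :
    Disjoint M₁ M₂ :=
  disjoint_left.2 fun _ hp₁ hp₂ => disjoint_left.1 hd (fst_mem_support hp₁) (fst_mem_support hp₂)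

theorem disjoint_support_of_isMatching_union (hM : IsMatching (M₁ ∪ M₂)) (hd : Disjoint M₁ M₂) :
    Disjoint (support M₁) (support M₂) := by
  refine disjoint_left.2 fun x hx₁ hx₂ => ?_
  obtain ⟨p, hp, hxp⟩ := mem_support.1 hx₁
  obtain ⟨q, hq, hxq⟩ := mem_support.1 hx₂
  obtain rfl := hM.eq_of_mem (mem_union_left _ hp) (mem_union_right _ hq) hxp hxq
  exact disjoint_left.1 hd hp hq

theorem card_support (hM : IsMatching M) : (support M).card = 2 * M.card := by
  have hinj : ∀ f : α × α → α, (∀ p, f p = p.1 ∨ f p = p.2) → Set.InjOn f M :=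
    fun f hf p hp q hq h => hM.eq_of_mem hp hq (hf p) (h ▸ hf q)
  rw [support, card_union_of_disjoint, card_image_of_injOn (hinj _ fun _ => .inl rfl),
    card_image_of_injOn (hinj _ fun _ => .inr rfl), two_mul]
  refine disjoint_left.2 fun x hx₁ hx₂ => ?_
  obtain ⟨p, hp, rfl⟩ := mem_image.1 hx₁
  obtain ⟨q, hq, hpq⟩ := mem_image.1 hx₂
  obtain rfl := hM.eq_of_mem hp hq (.inl rfl) (.inr hpq.symm)
  exact (hM.1 p hp).ne hpq.symm

theorem IsNoncrossing.union (h₁ : IsNoncrossing M₁) (h₂ : IsNoncrossing M₂)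
    (h₁₂ : ∀ p ∈ M₁, ∀ q ∈ M₂, p.2 < q.1 ∨ p.1 < q.1 ∧ q.2 < p.2) :
    IsNoncrossing (M₁ ∪ M₂) := by
  rintro ⟨p, hp, q, hq, hcross⟩
  rcases mem_union.1 hp with hp | hp <;> rcases mem_union.1 hq with hq | hq
  · exact h₁ ⟨p, hp, q, hq, hcross⟩
  · rcases h₁₂ p hp q hq with h | h <;> grind
  · rcases h₁₂ q hq p hp with h | h <;> grind
  · exact h₂ ⟨p, hp, q, hq, hcross⟩

open Classical in
noncomputable def ncPerfect (S : Finset α) : Finset (Finset (α × α)) :=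
  (S ×ˢ S).powerset.filter fun M => IsMatching M ∧ IsNoncrossing M ∧ support M = S

theorem mem_ncPerfect : M ∈ ncPerfect S ↔ IsMatching M ∧ IsNoncrossing M ∧ support M = S := by
  classical
  refine ⟨fun h => (mem_filter.1 h).2, fun h => mem_filter.2 ⟨mem_powerset.2 fun p hp => ?_, h⟩⟩
  rw [← h.2.2]
  exact mem_product.2 ⟨fst_mem_support hp, snd_mem_support hp⟩

theorem ncPerfect_empty : ncPerfect (∅ : Finset α) = {∅} := by
  ext M
  simp only [mem_ncPerfect, support_eq_empty, mem_singleton]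
  constructor
  · exact fun h => h.2.2
  · rintro rfl
    exact ⟨⟨by simp, by simp⟩, by simp [IsNoncrossing], rfl⟩

theorem even_card_of_mem_ncPerfect (hM : M ∈ ncPerfect S) : Even S.card := by
  obtain ⟨hmatch, -, rfl⟩ := mem_ncPerfect.1 hM
  exact ⟨M.card, by rw [card_support hmatch, two_mul]⟩

theorem singleton_mem_ncPerfect (h : a < b) : {(a, b)} ∈ ncPerfect {a, b} :=
  mem_ncPerfect.2 ⟨isMatching_singleton h, by simp [IsNoncrossing], support_singleton⟩

theorem union_mem_ncPerfect {S₁ S₂ : Finset α} (h₁ : M₁ ∈ ncPerfect S₁) (h₂ : M₂ ∈ ncPerfect S₂)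
    (hd : Disjoint S₁ S₂) (h₁₂ : ∀ p ∈ M₁, ∀ q ∈ M₂, p.2 < q.1 ∨ p.1 < q.1 ∧ q.2 < p.2) :
    M₁ ∪ M₂ ∈ ncPerfect (S₁ ∪ S₂) := by
  obtain ⟨hm₁, hn₁, rfl⟩ := mem_ncPerfect.1 h₁
  obtain ⟨hm₂, hn₂, rfl⟩ := mem_ncPerfect.1 h₂
  exact mem_ncPerfect.2 ⟨hm₁.union hm₂ hd, hn₁.union hn₂ h₁₂, support_union⟩

theorem filter_mem_ncPerfect_filter (hM : M ∈ ncPerfect S) (P : α → Prop) [DecidablePred P]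
    (hP : ∀ p ∈ M, P p.1 ↔ P p.2) : M.filter (fun p => P p.1) ∈ ncPerfect (S.filter P) := by
  obtain ⟨hmatch, hnc, rfl⟩ := mem_ncPerfect.1 hM
  refine mem_ncPerfect.2 ⟨hmatch.mono (filter_subset _ _), hnc.mono (filter_subset _ _), ?_⟩
  ext x
  simp only [mem_filter, mem_support]
  constructor
  · rintro ⟨p, ⟨hp, hPp⟩, hx⟩
    exact ⟨⟨p, hp, hx⟩, by rcases hx with rfl | rfl <;> [exact hPp; exact (hP p hp).1 hPp]⟩
  · rintro ⟨⟨p, hp, hx⟩, hPx⟩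
    exact ⟨p, ⟨hp, by rcases hx with rfl | rfl <;> [exact hPx; exact (hP p hp).2 hPx]⟩, hx⟩

theorem fst_mem_snd_mem_of_mem_ncPerfect (hM : M ∈ ncPerfect S) (hp : p ∈ M) :
    p.1 ∈ S ∧ p.2 ∈ S := by
  rw [← (mem_ncPerfect.1 hM).2.2]
  exact ⟨fst_mem_support hp, snd_mem_support hp⟩

section Minimum

variable (hmin : ∀ x ∈ S, a ≤ x)
include hmin

theorem eq_or_inside_or_outside (hM : M ∈ ncPerfect S) (hab : (a, b) ∈ M) (hp : p ∈ M) :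
    p = (a, b) ∨ (a < p.1 ∧ p.2 < b) ∨ b < p.1 := by
  obtain ⟨hmatch, hnc, -⟩ := mem_ncPerfect.1 hM
  refine or_iff_not_imp_left.2 fun hpab => ?_
  have hdistinct := hmatch.2 p hp (a, b) hab hpab
  have hap : a ≤ p.1 := hmin _ (fst_mem_snd_mem_of_mem_ncPerfect hM hp).1
  have hlt := hmatch.1 p hp
  have hcross : ¬ (a < p.1 ∧ p.1 < b ∧ b < p.2) := fun h => hnc ⟨(a, b), hab, p, hp, h⟩
  grind

theorem insert_union_mem_ncPerfect (ha : a ∈ S) (hb : b ∈ S) (hab : a < b)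
    (h₁ : M₁ ∈ ncPerfect (S.filter fun x => a < x ∧ x < b))
    (h₂ : M₂ ∈ ncPerfect (S.filter (b < ·))) :
    insert (a, b) (M₁ ∪ M₂) ∈ ncPerfect S := by
  have hS : S = {a, b} ∪ ((S.filter fun x => a < x ∧ x < b) ∪ S.filter (b < ·)) := by
    ext x
    simp only [mem_union, mem_insert, mem_singleton, mem_filter]
    have := hmin x
    grind
  have hin (p) (hp : p ∈ M₁) : a < p.1 ∧ p.2 < b := by
    have := fst_mem_snd_mem_of_mem_ncPerfect h₁ hp
    simp only [mem_filter] at this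
    exact ⟨this.1.2.1, this.2.2.2⟩
  have hout (q) (hq : q ∈ M₂) : b < q.1 :=
    (mem_filter.1 (fst_mem_snd_mem_of_mem_ncPerfect h₂ hq).1).2
  rw [insert_eq, hS]
  refine union_mem_ncPerfect (singleton_mem_ncPerfect hab)
    (union_mem_ncPerfect h₁ h₂ ?_ fun p hp q hq => .inl ((hin p hp).2.trans (hout q hq))) ?_ ?_
  · exact disjoint_filter.2 fun x _ hx => by order
  · simp only [disjoint_insert_left, disjoint_singleton_left, mem_union, mem_filter]
    grind
  · simp only [mem_singleton, forall_eq, mem_union]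
    rintro q (hq | hq)
    · exact .inr (hin q hq)
    · exact .inl (hout q hq)

theorem card_filter_mem_ncPerfect (ha : a ∈ S) (hb : b ∈ S) (hab : a < b) :
    ((ncPerfect S).filter ((a, b) ∈ ·)).card =
      (ncPerfect (S.filter fun x => a < x ∧ x < b)).card * (ncPerfect (S.filter (b < ·))).card := by
  rw [← card_product]
  refine card_nbij' (fun M => (M.filter fun p => a < p.1 ∧ p.1 < b, M.filter fun p => b < p.1))
    (fun N => insert (a, b) (N.1 ∪ N.2)) ?_ ?_ ?_ ?_
  · intro M hM
    obtain ⟨hM, hab'⟩ := mem_filter.1 hM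
    have hcases (p) (hp : p ∈ M) := eq_or_inside_or_outside hmin hM hab' hp
    have hlt (p) (hp : p ∈ M) := (mem_ncPerfect.1 hM).1.1 p hp
    refine mem_product.2 ⟨filter_mem_ncPerfect_filter hM _ fun p hp => ?_,
      filter_mem_ncPerfect_filter hM _ fun p hp => ?_⟩ <;>
    · have := hlt p hp
      rcases hcases p hp with rfl | h | h <;> grind
  · rintro ⟨M₁, M₂⟩ hN
    obtain ⟨h₁, h₂⟩ := mem_product.1 hN
    exact mem_filter.2 ⟨insert_union_mem_ncPerfect hmin ha hb hab h₁ h₂, mem_insert_self _ _⟩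
  · intro M hM
    obtain ⟨hM, hab'⟩ := mem_filter.1 hM
    ext p
    simp only [mem_insert, mem_union, mem_filter]
    have := fun hp : p ∈ M => eq_or_inside_or_outside hmin hM hab' hp
    have := (mem_ncPerfect.1 hM).1.1 p
    grind
  · rintro ⟨M₁, M₂⟩ hN
    obtain ⟨h₁, h₂⟩ := mem_product.1 hN
    have hin (p) (hp : p ∈ M₁) := mem_filter.1 (fst_mem_snd_mem_of_mem_ncPerfect h₁ hp).1
    have hout (q) (hq : q ∈ M₂) := mem_filter.1 (fst_mem_snd_mem_of_mem_ncPerfect h₂ hq).1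
    simp only [Prod.mk.injEq]
    constructor <;> ext p <;> simp only [mem_filter, mem_insert, mem_union] <;> grind

end Minimum

theorem card_ncPerfect_eq_sum (ha : a ∈ S) (hmin : ∀ x ∈ S, a ≤ x) :
    (ncPerfect S).card = ∑ b ∈ S, ((ncPerfect S).filter ((a, b) ∈ ·)).card := by
  rw [← card_biUnion]
  · congr 1
    ext M
    simp only [mem_biUnion, mem_filter]
    refine ⟨fun hM => ?_, fun ⟨_, _, hM, _⟩ => hM⟩
    obtain ⟨hmatch, -, hsupp⟩ := mem_ncPerfect.1 hM
    obtain ⟨p, hp, hap⟩ := mem_support.1 (hsupp ▸ ha)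
    have hlt := hmatch.1 p hp
    have hpa : a ≤ p.1 := hmin _ (fst_mem_snd_mem_of_mem_ncPerfect hM hp).1
    obtain rfl : a = p.1 := hap.resolve_right fun h => by order
    exact ⟨p.2, (fst_mem_snd_mem_of_mem_ncPerfect hM hp).2, hM, hp⟩
  · intro b _ b' _ hbb'
    refine disjoint_left.2 fun M hb hb' => hbb' ?_
    have := (mem_ncPerfect.1 (mem_filter.1 hb).1).1.eq_of_mem (mem_filter.1 hb).2
      (mem_filter.1 hb').2 (.inl rfl) (.inl rfl)
    exact (Prod.mk.inj this).2

section Transport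

variable (f : α ↪o β)

theorem isMatching_map :
    IsMatching (M.map (f.toEmbedding.prodMap f.toEmbedding)) ↔ IsMatching M := by
  simp only [IsMatching, forall_mem_map, Function.Embedding.coe_prodMap, Prod.map_fst,
    Prod.map_snd, RelEmbedding.coe_toEmbedding, f.lt_iff_lt, f.injective.ne_iff,
    (f.injective.prodMap f.injective).ne_iff]

theorem isNoncrossing_map :
    IsNoncrossing (M.map (f.toEmbedding.prodMap f.toEmbedding)) ↔ IsNoncrossing M := by
  simp [IsNoncrossing]

theorem support_map :
    support (M.map (f.toEmbedding.prodMap f.toEmbedding)) = (support M).map f.toEmbedding := by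
  ext x
  simp only [mem_support, mem_map, Function.Embedding.coe_prodMap, RelEmbedding.coe_toEmbedding]
  constructor
  · rintro ⟨_, ⟨p, hp, rfl⟩, h | h⟩
    exacts [⟨p.1, ⟨p, hp, .inl rfl⟩, h.symm⟩, ⟨p.2, ⟨p, hp, .inr rfl⟩, h.symm⟩]
  · rintro ⟨y, ⟨p, hp, h | h⟩, rfl⟩ <;> subst h
    exacts [⟨_, ⟨p, hp, rfl⟩, .inl rfl⟩, ⟨_, ⟨p, hp, rfl⟩, .inr rfl⟩]

theorem map_mem_ncPerfect_map_iff :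
    M.map (f.toEmbedding.prodMap f.toEmbedding) ∈ ncPerfect (S.map f.toEmbedding) ↔
      M ∈ ncPerfect S := by
  simp only [mem_ncPerfect, isMatching_map, isNoncrossing_map, support_map,
    map_inj]

theorem ncPerfect_map : ncPerfect (S.map f.toEmbedding) =
    (ncPerfect S).image (Finset.map (f.toEmbedding.prodMap f.toEmbedding)) := by
  ext N
  simp only [mem_image]
  refine ⟨fun hN => ?_, fun ⟨M, hM, hMN⟩ => hMN ▸ (map_mem_ncPerfect_map_iff f).2 hM⟩
  have hsub : N ⊆ (S ×ˢ S).map (f.toEmbedding.prodMap f.toEmbedding) := by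
    intro p hp
    obtain ⟨h₁, h₂⟩ := fst_mem_snd_mem_of_mem_ncPerfect hN hp
    obtain ⟨x, hx, hx'⟩ := mem_map.1 h₁
    obtain ⟨y, hy, hy'⟩ := mem_map.1 h₂
    exact mem_map.2 ⟨(x, y), mem_product.2 ⟨hx, hy⟩, Prod.ext hx' hy'⟩
  obtain ⟨M, -, rfl⟩ := subset_map_iff.1 hsub
  exact ⟨M, (map_mem_ncPerfect_map_iff f).1 hN, rfl⟩

theorem card_ncPerfect_map :
    (ncPerfect (S.map f.toEmbedding)).card = (ncPerfect S).card := by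
  rw [ncPerfect_map, card_image_of_injective _ (map_injective _)]

end Transport

noncomputable def ncCount (k : ℕ) : ℕ := (ncPerfect (univ : Finset (Fin k))).card

theorem card_ncPerfect (S : Finset α) : (ncPerfect S).card = ncCount S.card := by
  rw [ncCount, ← card_ncPerfect_map (S.orderEmbOfFin rfl), map_orderEmbOfFin_univ]

theorem ncCount_zero : ncCount 0 = 1 := by
  rw [ncCount, univ_eq_empty, ncPerfect_empty, card_singleton]

theorem ncCount_of_odd {k : ℕ} (hk : Odd k) : ncCount k = 0 := by
  refine card_eq_zero.2 (eq_empty_of_forall_notMem fun M hM => ?_)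
  have := even_card_of_mem_ncPerfect hM
  rw [card_univ, Fintype.card_fin] at this
  exact Nat.not_even_iff_odd.2 hk this

theorem ncCount_succ (m : ℕ) :
    ncCount (m + 1) = ∑ k ∈ range m, ncCount k * ncCount (m - 1 - k) := by
  have hmin (x : Fin (m + 1)) (_ : x ∈ univ) : 0 ≤ x := Fin.zero_le x
  have hloop : (ncPerfect univ).filter (((0 : Fin (m + 1)), (0 : Fin (m + 1))) ∈ ·) = ∅ :=
    filter_eq_empty_iff.2 fun M hM h => lt_irrefl _ ((mem_ncPerfect.1 hM).1.1 _ h)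
  rw [ncCount, card_ncPerfect_eq_sum (mem_univ 0) hmin, Fin.sum_univ_succ, hloop, card_empty,
    zero_add, ← Fin.sum_univ_eq_sum_range]
  -- the partner `k + 1` of `0` has `k` points inside its arc and `m - 1 - k` after it
  refine sum_congr rfl fun k _ => ?_
  rw [card_filter_mem_ncPerfect hmin (mem_univ _) (mem_univ _) (Fin.succ_pos k), card_ncPerfect,
    card_ncPerfect, show univ.filter (fun x => 0 < x ∧ x < k.succ) = Ioo 0 k.succ by ext; simp,
    show univ.filter (k.succ < ·) = Ioi k.succ by ext; simp, Fin.card_Ioo, Fin.card_Ioi]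
  simp only [Fin.val_succ, Fin.val_zero]
  congr 2; omega

theorem ncCount_two_mul (n : ℕ) : ncCount (2 * n) = catalan n := by
  induction n using Nat.strong_induction_on with
  | _ n ih =>
  cases n with
  | zero => rw [mul_zero, catalan_zero, ncCount_zero]
  | succ n =>
    rw [show 2 * (n + 1) = 2 * n + 1 + 1 by ring, ncCount_succ, Nat.add_sub_cancel,
      sum_range_two_mul_add_one_of_odd _ fun k hk => by rw [ncCount_of_odd hk, zero_mul],
      catalan_succ, Fin.sum_univ_eq_sum_range (fun i => catalan i * catalan (n - i))]
    refine sum_congr rfl fun i hi => ?_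
    have hi : i < n + 1 := mem_range.1 hi
    rw [show 2 * n - 2 * i = 2 * (n - i) by omega, ih i (by omega), ih (n - i) (by omega)]

theorem card_ncPerfect_of_card_eq {n : ℕ} (h : S.card = 2 * n) :
    (ncPerfect S).card = catalan n := by
  rw [card_ncPerfect, h, ncCount_two_mul]

noncomputable def ncPerfectPairs (S : Finset α) : Finset (Finset (α × α) × Finset (α × α)) :=
  S.powerset.biUnion fun T => ncPerfect T ×ˢ ncPerfect (S \ T)

theorem mem_ncPerfectPairs {q : Finset (α × α) × Finset (α × α)} :
    q ∈ ncPerfectPairs S ↔ IsMatching q.1 ∧ IsNoncrossing q.1 ∧ IsMatching q.2 ∧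
      IsNoncrossing q.2 ∧ Disjoint q.1 q.2 ∧ IsMatching (q.1 ∪ q.2) ∧ support (q.1 ∪ q.2) = S := by
  simp only [ncPerfectPairs, mem_biUnion, mem_powerset, mem_product, mem_ncPerfect]
  constructor
  · rintro ⟨T, hTS, ⟨hm₁, hn₁, rfl⟩, hm₂, hn₂, hsupp₂⟩
    have hd : Disjoint (support q.1) (support q.2) := hsupp₂ ▸ disjoint_sdiff
    exact ⟨hm₁, hn₁, hm₂, hn₂, disjoint_of_disjoint_support hd, hm₁.union hm₂ hd,
      by rw [support_union, hsupp₂, union_sdiff_of_subset hTS]⟩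
  · rintro ⟨hm₁, hn₁, hm₂, hn₂, hd, hm, rfl⟩
    refine ⟨support q.1, by rw [support_union]; exact subset_union_left, ⟨hm₁, hn₁, rfl⟩,
      hm₂, hn₂, ?_⟩
    rw [support_union, union_sdiff_cancel_left (disjoint_support_of_isMatching_union hm hd)]

theorem card_ncPerfectPairs (S : Finset α) : (ncPerfectPairs S).card =
    ∑ T ∈ S.powerset, (ncPerfect T).card * (ncPerfect (S \ T)).card := by
  rw [ncPerfectPairs, card_biUnion]
  · simp only [card_product]
  · intro T _ T' _ hTT'
    refine disjoint_left.2 fun q hq hq' => hTT' ?_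
    rw [← (mem_ncPerfect.1 (mem_product.1 hq).1).2.2, (mem_ncPerfect.1 (mem_product.1 hq').1).2.2]

theorem card_ncPerfectPairs_univ (n : ℕ) :
    (ncPerfectPairs (univ : Finset (Fin (2 * n)))).card = catalan n * catalan (n + 1) := by
  have hterm (T : Finset (Fin (2 * n))) :
      (ncPerfect T).card * (ncPerfect (univ \ T)).card =
        ncCount T.card * ncCount (2 * n - T.card) := by
    rw [card_ncPerfect, card_ncPerfect, card_univ_sdiff, Fintype.card_fin]
  simp only [card_ncPerfectPairs, hterm]
  rw [sum_powerset_apply_card (fun k => ncCount k * ncCount (2 * n - k)), card_univ,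
    Fintype.card_fin, sum_range_two_mul_add_one_of_odd _ fun k hk => by
      rw [ncCount_of_odd hk, zero_mul, smul_zero], ← sum_choose_mul_catalan_mul_catalan]
  refine sum_congr rfl fun i hi => ?_
  rw [smul_eq_mul, show 2 * n - 2 * i = 2 * (n - i) by omega, ncCount_two_mul, ncCount_two_mul]

end NoncrossingMatching

/-- Noncrossing perfect matchings of `{1,…,2n}` are counted by `C_n`, and pairs
`(M₁,M₂)` of noncrossing partial matchings partitioning `{1,…,2n}` into matched pairs
are counted by `C_n C_{n+1}`. -/
theorem stmt16 (n : ℕ) :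
    Nat.card {M : Finset (Fin (2*n) × Fin (2*n)) //
        IsPartialMatching n M ∧ IsNoncrossingPM n M ∧ IsPerfect n M} = catalan n ∧
    Nat.card {p : Finset (Fin (2*n) × Fin (2*n)) × Finset (Fin (2*n) × Fin (2*n)) //
        IsPartialMatching n p.1 ∧ IsNoncrossingPM n p.1 ∧
        IsPartialMatching n p.2 ∧ IsNoncrossingPM n p.2 ∧
        Disjoint p.1 p.2 ∧ IsPartialMatching n (p.1 ∪ p.2) ∧ IsPerfect n (p.1 ∪ p.2)} =
      catalan n * catalan (n + 1) := by
  have hperfect (M : Finset (Fin (2*n) × Fin (2*n))) :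
      IsPerfect n M ↔ NoncrossingMatching.support M = univ := by
    simp only [IsPerfect, eq_univ_iff_forall, NoncrossingMatching.mem_support]
  constructor
  · rw [← NoncrossingMatching.card_ncPerfect_of_card_eq (S := (univ : Finset (Fin (2 * n))))
      (by simp), ← Nat.card_eq_finsetCard]
    exact Nat.card_congr <| Equiv.subtypeEquivRight fun M => by
      rw [NoncrossingMatching.mem_ncPerfect, hperfect]; rfl
  · rw [← NoncrossingMatching.card_ncPerfectPairs_univ, ← Nat.card_eq_finsetCard]
    exact Nat.card_congr <| Equiv.subtypeEquivRight fun q => by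
      rw [NoncrossingMatching.mem_ncPerfectPairs, hperfect]; rfl
end
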